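/- arXiv:2601.03488 — 4 statements merged into one kernel-verified Lean document; each statement's English description precedes it below -/
import Mathlib

section
/- For every integer n ≥ 3, the domination number of the prism graph G_n = C_n □ P_2 equals n/2 if n ≡ 0 (mod 4), equals (n+1)/2 if n is odd (i.e., n ≡ 1 or 3 (mod 4)), and equals n/2 + 1 if n ≡ 2 (mod 4). -/
/-- The prism graph `C_n □ P_2` on vertex set `ZMod n × Fin 2`:
`(i,r)` is adjacent to `(i±1,r)` and to `(i,1-r)`. -/
def prismGraph (n : ℕ) : SimpleGraph (ZMod n × Fin 2) where
  Adj u v := u ≠ v ∧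
    ((u.1 = v.1 ∧ u.2 ≠ v.2) ∨
     (u.2 = v.2 ∧ (u.1 = v.1 + 1 ∨ v.1 = u.1 + 1)))
  symm := by
    constructor
    rintro ⟨i, r⟩ ⟨j, s⟩ ⟨hne, h⟩
    refine ⟨Ne.symm hne, ?_⟩
    rcases h with ⟨h1, h2⟩ | ⟨h1, h2⟩
    · exact Or.inl ⟨h1.symm, h2.symm⟩
    · exact Or.inr ⟨h1.symm, h2.symm⟩
  loopless := by
    constructor
    rintro ⟨i, r⟩ ⟨hne, -⟩
    exact hne rfl

/-- `S` is a dominating set of the prism graph: every vertex is in `S`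
or adjacent to a vertex of `S`. -/
def IsDominatingSet (n : ℕ) (S : Set (ZMod n × Fin 2)) : Prop :=
  ∀ v, v ∈ S ∨ ∃ u ∈ S, (prismGraph n).Adj u v

/-- The domination number `γ(G_n)`: minimum cardinality of a dominating set. -/
noncomputable def domNum (n : ℕ) : ℕ :=
  sInf {k | ∃ S : Finset (ZMod n × Fin 2), S.card = k ∧ IsDominatingSet n ↑S}

/-- The dominion `ζ(G_n)`: the number of dominating sets of cardinality `γ(G_n)`. -/
noncomputable def dominion (n : ℕ) : ℕ :=
  {S : Finset (ZMod n × Fin 2) | S.card = domNum n ∧ IsDominatingSet n ↑S}.ncard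

/-- The set of vertices encoded by a word `w : ZMod n → Bool × Bool`;
the first bit of `w i` records membership of the top vertex `(i,0)`,
the second bit that of the bottom vertex `(i,1)`. -/
def wordSet (n : ℕ) (w : ZMod n → Bool × Bool) : Set (ZMod n × Fin 2) :=
  {v | (if v.2 = 0 then (w v.1).1 else (w v.1).2) = true}

/-- A minimum dominating word: it encodes a dominating set of cardinality `γ(G_n)`. -/
def IsMinDomWord (n : ℕ) (w : ZMod n → Bool × Bool) : Prop :=
  IsDominatingSet n (wordSet n w) ∧ (wordSet n w).ncard = domNum n

def letC : Bool × Bool := (false, false)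
def letA : Bool × Bool := (true, false)
def letB : Bool × Bool := (false, true)
def letD : Bool × Bool := (true, true)

/-!
A closed neighbourhood has at most four vertices, so a dominating set of the `2n` vertices has at
least `n / 2` elements. Conversely the zigzag `(2j, j mod 2)`, `j ≤ n / 2`, dominates, and when
`4 ∣ n` its last vertex coincides with its first. When `n ≡ 2 (mod 4)`, a dominating set with
`n / 2` elements would be a perfect code (pairwise disjoint closed neighbourhoods); this forces
`(i, r) ∈ S → (i + 2, r + 1) ∈ S`, and going once around the cycle in `n / 2` such steps, an odd
number, puts both `(i, r)` and `(i, r + 1)` into `S`.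
-/

section

open Finset

variable {n : ℕ}

def closedNbhd (n : ℕ) (u : ZMod n × Fin 2) : Finset (ZMod n × Fin 2) :=
  {u, (u.1 + 1, u.2), (u.1 - 1, u.2), (u.1, u.2 + 1)}

theorem Fin.fin_two_ne_iff_eq_add_one {r s : Fin 2} : r ≠ s ↔ s = r + 1 := by
  revert r s; decide

@[simp]
theorem Fin.fin_two_add_one_add_one (r : Fin 2) : r + 1 + 1 = r := by
  revert r; decide

lemma mem_closedNbhd_comm {u v : ZMod n × Fin 2} :
    v ∈ closedNbhd n u ↔ u ∈ closedNbhd n v := by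
  simp only [closedNbhd, mem_insert, mem_singleton, Prod.ext_iff, eq_sub_iff_add_eq,
    ← Fin.fin_two_ne_iff_eq_add_one]
  grind

lemma card_closedNbhd_le (u : ZMod n × Fin 2) : #(closedNbhd n u) ≤ 4 := card_le_four

lemma mem_closedNbhd_of_adj {u v : ZMod n × Fin 2} (h : (prismGraph n).Adj u v) :
    v ∈ closedNbhd n u := by
  obtain ⟨-, ⟨h1, h2⟩ | ⟨h1, h2 | h2⟩⟩ := h
  · simp [closedNbhd, Prod.ext_iff, h1, Fin.fin_two_ne_iff_eq_add_one.mp h2]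
  · simp [closedNbhd, Prod.ext_iff, h1, h2]
  · simp [closedNbhd, Prod.ext_iff, h1, h2]

lemma eq_or_adj_of_mem_closedNbhd (hn : n ≠ 1) {u v : ZMod n × Fin 2}
    (h : v ∈ closedNbhd n u) : v = u ∨ (prismGraph n).Adj u v := by
  have : Nontrivial (ZMod n) := ZMod.nontrivial_iff.mpr hn
  obtain ⟨i, r⟩ := u
  simp only [closedNbhd, mem_insert, mem_singleton] at h
  rcases h with rfl | rfl | rfl | rfl
  · exact .inl rfl
  · exact .inr ⟨by simp, .inr ⟨rfl, .inr rfl⟩⟩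
  · exact .inr ⟨by simp [eq_sub_iff_add_eq], .inr ⟨rfl, .inl (sub_add_cancel i 1).symm⟩⟩
  · exact .inr ⟨by simp [Prod.ext_iff], .inl ⟨rfl, Fin.fin_two_ne_iff_eq_add_one.mpr rfl⟩⟩

lemma IsDominatingSet.exists_mem_closedNbhd {S : Set (ZMod n × Fin 2)}
    (hS : IsDominatingSet n S) (v : ZMod n × Fin 2) : ∃ u ∈ S, v ∈ closedNbhd n u := by
  obtain hv | ⟨u, hu, huv⟩ := hS v
  · exact ⟨v, hv, by simp [closedNbhd]⟩
  · exact ⟨u, hu, mem_closedNbhd_of_adj huv⟩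

lemma isDominatingSet_of_forall_exists_mem_closedNbhd (hn : n ≠ 1) {S : Set (ZMod n × Fin 2)}
    (hS : ∀ v, ∃ u ∈ S, v ∈ closedNbhd n u) : IsDominatingSet n S := by
  intro v
  obtain ⟨u, hu, huv⟩ := hS v
  obtain rfl | h := eq_or_adj_of_mem_closedNbhd hn huv
  exacts [.inl hu, .inr ⟨u, hu, h⟩]

section Counting

variable [NeZero n] {S : Finset (ZMod n × Fin 2)}

lemma card_zmod_prod_fin_two : Fintype.card (ZMod n × Fin 2) = 2 * n := by
  simp [ZMod.card, mul_comm]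

lemma IsDominatingSet.two_mul_le_four_mul_card (hS : IsDominatingSet n S) : 2 * n ≤ 4 * #S := by
  have := card_nsmul_le_card_nsmul (fun v u => v ∈ closedNbhd n u) (s := univ) (t := S) (m := 1)
    (n := 4) (fun v _ => one_le_card.mpr ?_) (fun u _ => ?_)
  · simpa [card_zmod_prod_fin_two, mul_comm] using this
  · obtain ⟨u, hu, hv⟩ := hS.exists_mem_closedNbhd v
    exact ⟨u, mem_bipartiteAbove _ |>.mpr ⟨hu, hv⟩⟩
  · exact (card_le_card fun v hv => by simp_all).trans (card_closedNbhd_le u)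

/-- Equality in the double count forces every vertex to have exactly one dominator. -/
lemma IsDominatingSet.pairwiseDisjoint_closedNbhd (hS : IsDominatingSet n S)
    (hcard : 4 * #S = 2 * n) : (S : Set (ZMod n × Fin 2)).PairwiseDisjoint (closedNbhd n) := by
  set dominators := fun v => S.bipartiteAbove (fun v u => v ∈ closedNbhd n u) v
  have hpos : ∀ v ∈ univ, 1 ≤ #(dominators v) := fun v _ => by
    obtain ⟨u, hu, hv⟩ := hS.exists_mem_closedNbhd v
    exact one_le_card.mpr ⟨u, mem_bipartiteAbove _ |>.mpr ⟨hu, hv⟩⟩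
  have hsum : ∑ v, #(dominators v) ≤ ∑ _v : ZMod n × Fin 2, 1 := by
    calc ∑ v, #(dominators v)
        = ∑ u ∈ S, #(univ.bipartiteBelow (fun v u => v ∈ closedNbhd n u) u) :=
          (sum_card_bipartiteAbove_eq_sum_card_bipartiteBelow _).symm
      _ ≤ ∑ u ∈ S, 4 := sum_le_sum fun u _ =>
          (card_le_card fun v hv => by simp_all).trans (card_closedNbhd_le u)
      _ = ∑ _v : ZMod n × Fin 2, 1 := by simp; omega
  have hone := (sum_eq_sum_iff_of_le hpos).mp (le_antisymm (sum_le_sum hpos) hsum)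
  intro u hu u' hu' hne
  refine disjoint_left.mpr fun v hv hv' => hne ?_
  exact card_le_one.mp (hone v (mem_univ v)).ge u (mem_bipartiteAbove _ |>.mpr ⟨hu, hv⟩) u'
    (mem_bipartiteAbove _ |>.mpr ⟨hu', hv'⟩)

end Counting

section PerfectCode

variable {S : Set (ZMod n × Fin 2)}

/-- Whoever dominates `(i + 1, r + 1)` must lie two columns to the right of `(i, r)`: the other
three candidates share a closed neighbour with `(i, r)`. -/
lemma IsDominatingSet.add_two_add_one_mem (hn : n ≠ 1) (hS : IsDominatingSet n S)
    (hdisj : S.PairwiseDisjoint (closedNbhd n)) {i : ZMod n} {r : Fin 2} (hir : (i, r) ∈ S) :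
    (i + 2, r + 1) ∈ S := by
  have : Nontrivial (ZMod n) := ZMod.nontrivial_iff.mpr hn
  obtain ⟨u, hu, hv⟩ := hS.exists_mem_closedNbhd (i + 1, r + 1)
  have key : ∀ w, w ∈ closedNbhd n (i, r) → w ∈ closedNbhd n u → u = (i, r) :=
    fun w hw hw' => hdisj.elim_finset hu hir w hw' hw
  rw [mem_closedNbhd_comm] at hv
  simp only [closedNbhd, mem_insert, mem_singleton] at hv
  rcases hv with rfl | rfl | rfl | rfl
  · simpa using key (i + 1, r) (by simp [closedNbhd]) (by simp [closedNbhd])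
  · convert hu using 2; ring
  · simpa using key (i, r) (by simp [closedNbhd]) (by simp [closedNbhd])
  · simpa using key (i + 1, r) (by simp [closedNbhd]) (by simp [closedNbhd])

lemma IsDominatingSet.add_four_mul_mem (hn : n ≠ 1) (hS : IsDominatingSet n S)
    (hdisj : S.PairwiseDisjoint (closedNbhd n)) {i : ZMod n} {r : Fin 2} (hir : (i, r) ∈ S)
    (k : ℕ) : (i + 4 * k, r) ∈ S := by
  induction k with
  | zero => simpa using hir
  | succ k ih =>
    have := hS.add_two_add_one_mem hn hdisj (hS.add_two_add_one_mem hn hdisj ih)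
    convert this using 2
    · push_cast; ring
    · simp

lemma IsDominatingSet.not_pairwiseDisjoint_closedNbhd (hn : n % 4 = 2) (hS : IsDominatingSet n S) :
    ¬ S.PairwiseDisjoint (closedNbhd n) := by
  intro hdisj
  have hn1 : n ≠ 1 := by omega
  obtain ⟨⟨i, r⟩, hir, -⟩ := hS.exists_mem_closedNbhd (0, 0)
  have hwrap : (i + 4 * (n / 4 : ℕ) + 2, r + 1) ∈ S :=
    hS.add_two_add_one_mem hn1 hdisj (hS.add_four_mul_mem hn1 hdisj hir _)
  have hcol : i + 4 * (n / 4 : ℕ) + 2 = i := by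
    have : ((4 * (n / 4) + 2 : ℕ) : ZMod n) = 0 := by
      rw [show 4 * (n / 4) + 2 = n by omega, ZMod.natCast_self]
    rw [add_assoc, add_eq_left]
    exact_mod_cast this
  rw [hcol] at hwrap
  have := hdisj.elim_finset hwrap hir (i, r) (by simp [closedNbhd]) (by simp [closedNbhd])
  simp at this

end PerfectCode

section Zigzag

open Fin.NatCast

def zigzag (n j : ℕ) : ZMod n × Fin 2 := ((2 * j : ℕ), (j : Fin 2))

lemma exists_le_half_mem_closedNbhd_zigzag [NeZero n] (v : ZMod n × Fin 2) :
    ∃ j ≤ n / 2, v ∈ closedNbhd n (zigzag n j) := by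
  obtain ⟨i, r⟩ := v
  have hlt := ZMod.val_lt i
  obtain ⟨p, hp | hp⟩ := Nat.even_or_odd' i.val <;>
    rw [← ZMod.natCast_zmod_val i, hp] <;>
    obtain rfl | rfl : r = (p : Fin 2) ∨ r = ((p + 1 : ℕ) : Fin 2) := by
      push_cast; generalize (p : Fin 2) = s; revert r s; decide
  · exact ⟨p, by omega, by simp [zigzag, closedNbhd]⟩
  · exact ⟨p, by omega, by simp [zigzag, closedNbhd]⟩
  · exact ⟨p, by omega, by simp [zigzag, closedNbhd]⟩
  · refine ⟨p + 1, by omega, ?_⟩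
    simp [zigzag, closedNbhd, mul_add, eq_sub_iff_add_eq, add_assoc, one_add_one_eq_two]

lemma isDominatingSet_image_zigzag [NeZero n] (hn : n ≠ 1) :
    IsDominatingSet n ↑((range (n / 2 + 1)).image (zigzag n)) :=
  isDominatingSet_of_forall_exists_mem_closedNbhd hn fun v =>
    let ⟨j, hj, hv⟩ := exists_le_half_mem_closedNbhd_zigzag v
    ⟨zigzag n j, mem_image_of_mem _ (mem_range_succ_iff.mpr hj), hv⟩

lemma image_zigzag_range_succ_half [NeZero n] (hn : 4 ∣ n) :
    (range (n / 2 + 1)).image (zigzag n) = (range (n / 2)).image (zigzag n) := by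
  have hclose : zigzag n (n / 2) = zigzag n 0 := by
    obtain ⟨m, rfl⟩ := hn
    simp only [zigzag, show 4 * m / 2 = 2 * m by omega, Prod.ext_iff]
    constructor
    · simp [show 2 * (2 * m) = 4 * m by ring]
    · push_cast; simp
  have hpos : 0 < n / 2 := by have := NeZero.ne n; omega
  rw [range_add_one, image_insert,
    insert_eq_of_mem (hclose ▸ mem_image_of_mem _ (mem_range.mpr hpos))]

end Zigzag

section DominationNumber

lemma domNum_le_card {S : Finset (ZMod n × Fin 2)} (hS : IsDominatingSet n ↑S) :
    domNum n ≤ #S :=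
  Nat.sInf_le ⟨S, rfl, hS⟩

variable [NeZero n]

lemma exists_isDominatingSet_card_eq_domNum :
    ∃ S : Finset (ZMod n × Fin 2), IsDominatingSet n ↑S ∧ #S = domNum n := by
  have hne : {k | ∃ S : Finset (ZMod n × Fin 2), #S = k ∧ IsDominatingSet n ↑S}.Nonempty :=
    ⟨_, univ, rfl, fun v => .inl (by simp)⟩
  obtain ⟨S, hcard, hS⟩ := Nat.sInf_mem hne
  exact ⟨S, hS, hcard⟩

lemma two_mul_le_four_mul_domNum : 2 * n ≤ 4 * domNum n := by
  obtain ⟨S, hS, hcard⟩ := exists_isDominatingSet_card_eq_domNum (n := n)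
  exact hcard ▸ hS.two_mul_le_four_mul_card

lemma four_mul_domNum_ne_of_mod_four_eq_two (hn : n % 4 = 2) : 4 * domNum n ≠ 2 * n := by
  obtain ⟨S, hS, hcard⟩ := exists_isDominatingSet_card_eq_domNum (n := n)
  exact fun h => hS.not_pairwiseDisjoint_closedNbhd hn (hS.pairwiseDisjoint_closedNbhd (hcard ▸ h))

lemma domNum_le_half_add_one (hn : n ≠ 1) : domNum n ≤ n / 2 + 1 :=
  (domNum_le_card (isDominatingSet_image_zigzag hn)).trans (card_image_le.trans (by simp))

lemma domNum_le_half_of_four_dvd (hn : 4 ∣ n) : domNum n ≤ n / 2 := by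
  have hS := isDominatingSet_image_zigzag (n := n) (by omega)
  rw [image_zigzag_range_succ_half hn] at hS
  exact (domNum_le_card hS).trans (card_image_le.trans (by simp))

end DominationNumber

end

theorem prism_domination_number (n : ℕ) (hn : 3 ≤ n) :
    (n % 4 = 0 → domNum n = n / 2) ∧
    (n % 2 = 1 → domNum n = (n + 1) / 2) ∧
    (n % 4 = 2 → domNum n = n / 2 + 1) := by
  have : NeZero n := ⟨by omega⟩
  have hlower := two_mul_le_four_mul_domNum (n := n)
  have hupper := domNum_le_half_add_one (n := n) (by omega)
  refine ⟨fun h4 => ?_, fun _ => by omega, fun h4 => ?_⟩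
  · have := domNum_le_half_of_four_dvd (Nat.dvd_of_mod_eq_zero h4)
    omega
  · have := four_mul_domNum_ne_of_mod_four_eq_two h4
    omega
end

section
/- If n ≥ 4 and n ≡ 0 (mod 4), then the dominion of the prism graph satisfies ζ(G_n) = 4. -/
/-!
Closed neighbourhoods have at most four vertices, so double counting gives `n ≤ 2 |S|` for
every dominating set `S`, with equality only if `S` meets each closed neighbourhood exactly
once (a perfect code). When `4 ∣ n`, the phase `(i, r) ↦ i + 2 r mod 4` takes four different
values on every closed neighbourhood, so each of its four fibres dominates; as they partition
the `2 n` vertices, each has exactly `n / 2` of them and `γ = n / 2`. Conversely, in a perfect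
code `v ∈ S` forces `v + (2, 1) ∈ S`, and the multiples of `(2, 1)` form the kernel of the
phase, so a perfect code contains a fibre and therefore equals it.
-/

open Finset

lemma Fin.val_nsmul {k : ℕ} [NeZero k] (m : ℕ) (a : Fin k) : (m • a).val = m * a.val % k := by
  induction m with
  | zero => simp
  | succ m ih => rw [succ_nsmul, Fin.val_add, ih, Nat.mod_add_mod, add_one_mul]

namespace PrismGraph

variable {n : ℕ}

def closedNbhd (v : ZMod n × Fin 2) : Finset (ZMod n × Fin 2) :=
  {v, v + (1, 0), v - (1, 0), v + (0, 1)}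

lemma fin_two_ne_iff_eq_add_one {a b : Fin 2} : a ≠ b ↔ a = b + 1 := by
  revert a b; decide

lemma mem_closedNbhd {u v : ZMod n × Fin 2} :
    u ∈ closedNbhd v ↔ u = v ∨ (prismGraph n).Adj u v := by
  obtain ⟨i, r⟩ := u
  obtain ⟨j, s⟩ := v
  by_cases huv : (i, r) = (j, s)
  · simp [huv, closedNbhd]
  rw [Prod.ext_iff] at huv
  simp only [closedNbhd, mem_insert, mem_singleton, prismGraph, ne_eq, Prod.ext_iff,
    Prod.fst_add, Prod.snd_add, add_zero, fin_two_ne_iff_eq_add_one, eq_sub_iff_add_eq,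
    @eq_comm _ j (i + 1)]
  tauto

lemma self_mem_closedNbhd (v : ZMod n × Fin 2) : v ∈ closedNbhd v :=
  mem_insert_self _ _

lemma mem_closedNbhd_comm {u v : ZMod n × Fin 2} : u ∈ closedNbhd v ↔ v ∈ closedNbhd u := by
  simp only [mem_closedNbhd, (prismGraph n).adj_comm, eq_comm]

lemma card_closedNbhd_le (v : ZMod n × Fin 2) : #(closedNbhd v) ≤ 4 := card_le_four

lemma isDominatingSet_iff {S : Finset (ZMod n × Fin 2)} :
    IsDominatingSet n S ↔ ∀ v, ∃ u ∈ S, u ∈ closedNbhd v := by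
  simp only [IsDominatingSet, mem_closedNbhd, mem_coe]
  refine forall_congr' fun v => ⟨?_, ?_⟩
  · rintro (hv | ⟨u, hu, huv⟩)
    exacts [⟨v, hv, .inl rfl⟩, ⟨u, hu, .inr huv⟩]
  · rintro ⟨u, hu, rfl | huv⟩
    exacts [.inl hu, .inr ⟨u, hu, huv⟩]

lemma one_le_card_inter_closedNbhd {S : Finset (ZMod n × Fin 2)}
    (hS : IsDominatingSet n S) (v : ZMod n × Fin 2) : 1 ≤ #{u ∈ S | u ∈ closedNbhd v} :=
  let ⟨u, hu, huv⟩ := isDominatingSet_iff.1 hS v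
  card_pos.2 ⟨u, mem_filter.2 ⟨hu, huv⟩⟩

def IsPerfectCode (n : ℕ) (S : Finset (ZMod n × Fin 2)) : Prop :=
  ∀ v, #{u ∈ S | u ∈ closedNbhd v} = 1

section PerfectCode

variable {S : Finset (ZMod n × Fin 2)}

lemma IsPerfectCode.exists_mem (hS : IsPerfectCode n S) (v : ZMod n × Fin 2) :
    ∃ u ∈ S, u ∈ closedNbhd v := by
  obtain ⟨u, hu⟩ := card_eq_one.1 (hS v)
  exact ⟨u, mem_filter.1 (hu ▸ mem_singleton_self u)⟩

lemma IsPerfectCode.eq_of_mem (hS : IsPerfectCode n S) {a b v : ZMod n × Fin 2}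
    (ha : a ∈ S) (hb : b ∈ S) (hav : a ∈ closedNbhd v) (hbv : b ∈ closedNbhd v) : a = b :=
  card_le_one.1 (hS v).le a (mem_filter.2 ⟨ha, hav⟩) b (mem_filter.2 ⟨hb, hbv⟩)

lemma IsPerfectCode.eq_of_subset (hS : IsPerfectCode n S) {T : Finset (ZMod n × Fin 2)}
    (hT : IsDominatingSet n T) (hTS : T ⊆ S) : T = S := by
  refine hTS.antisymm fun w hw => ?_
  obtain ⟨u, hu, huw⟩ := isDominatingSet_iff.1 hT w
  rwa [hS.eq_of_mem hw (hTS hu) (self_mem_closedNbhd w) huw]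

/-- The neighbourhood of `v + (1, 1)` must meet `S`; apart from `v + (2, 1)`, each of its points
shares a neighbourhood with `v`. -/
lemma IsPerfectCode.add_two_one_mem [Nontrivial (ZMod n)] (hS : IsPerfectCode n S)
    {v : ZMod n × Fin 2} (hv : v ∈ S) : v + (2, 1) ∈ S := by
  obtain ⟨u, hu, huN⟩ := hS.exists_mem (v + (1, 1))
  have h2 : (1 : Fin 2) + 1 = 0 := rfl
  simp only [closedNbhd, mem_insert, mem_singleton, add_assoc, add_sub_assoc, Prod.mk_add_mk,
    Prod.mk_sub_mk, one_add_one_eq_two, h2, add_zero, sub_self, sub_zero] at huN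
  rcases huN with rfl | rfl | rfl | rfl
  · have := hS.eq_of_mem hv hu (v := v + (0, 1)) (by simp [closedNbhd, Prod.ext_iff, add_assoc])
      (by simp [closedNbhd, Prod.ext_iff, add_assoc])
    simp [Prod.ext_iff] at this
  · exact hu
  · have := hS.eq_of_mem hv hu (self_mem_closedNbhd v) (by simp [closedNbhd])
    simp [Prod.ext_iff] at this
  · have := hS.eq_of_mem hv hu (self_mem_closedNbhd v) (by simp [closedNbhd])
    simp [Prod.ext_iff] at this

lemma IsPerfectCode.add_nsmul_two_one_mem [Nontrivial (ZMod n)] (hS : IsPerfectCode n S)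
    {u : ZMod n × Fin 2} (hu : u ∈ S) (m : ℕ) : u + m • (2, 1) ∈ S := by
  induction m with
  | zero => simpa using hu
  | succ m ih => simpa only [succ_nsmul, ← add_assoc] using hS.add_two_one_mem ih

end PerfectCode

section Counting

variable [NeZero n]

lemma sum_card_inter_closedNbhd_le (S : Finset (ZMod n × Fin 2)) :
    ∑ v, #{u ∈ S | u ∈ closedNbhd v} ≤ 4 * #S :=
  calc ∑ v, #{u ∈ S | u ∈ closedNbhd v}
      = ∑ u ∈ S, #{v | u ∈ closedNbhd v} :=
        (sum_card_bipartiteAbove_eq_sum_card_bipartiteBelow _).symm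
    _ = ∑ u ∈ S, #(closedNbhd u) := by
        simp only [mem_closedNbhd_comm, filter_mem_eq_inter, univ_inter]
    _ ≤ ∑ _u ∈ S, 4 := sum_le_sum fun u _ => card_closedNbhd_le u
    _ = 4 * #S := by rw [sum_const, smul_eq_mul, mul_comm]

lemma sum_one_eq_two_mul : ∑ _v : ZMod n × Fin 2, 1 = 2 * n := by
  simp [ZMod.card, mul_comm]

lemma le_two_mul_card_of_isDominatingSet {S : Finset (ZMod n × Fin 2)}
    (hS : IsDominatingSet n S) : n ≤ 2 * #S := by
  have := calc 2 * n = ∑ _v : ZMod n × Fin 2, 1 := sum_one_eq_two_mul.symm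
    _ ≤ ∑ v, #{u ∈ S | u ∈ closedNbhd v} :=
        sum_le_sum fun v _ => one_le_card_inter_closedNbhd hS v
    _ ≤ 4 * #S := sum_card_inter_closedNbhd_le S
  omega

lemma isPerfectCode_of_isDominatingSet {S : Finset (ZMod n × Fin 2)}
    (hS : IsDominatingSet n S) (hcard : 2 * #S ≤ n) : IsPerfectCode n S := by
  have hsum : ∑ _v : ZMod n × Fin 2, 1 = ∑ v, #{u ∈ S | u ∈ closedNbhd v} := by
    refine le_antisymm (sum_le_sum fun v _ => one_le_card_inter_closedNbhd hS v) ?_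
    rw [sum_one_eq_two_mul]
    linarith [sum_card_inter_closedNbhd_le S]
  exact fun v =>
    ((sum_eq_sum_iff_of_le fun v _ => one_le_card_inter_closedNbhd hS v).1 hsum v (mem_univ v)).symm

end Counting

section Phase

variable (hd : 4 ∣ n)

def phase : ZMod n × Fin 2 →+ ZMod 4 where
  toFun v := ZMod.castHom hd (ZMod 4) v.1 + 2 * v.2.val
  map_zero' := by simp
  map_add' v w := by
    have h : ∀ a b : Fin 2, (2 * (a + b).val : ZMod 4) = 2 * a.val + 2 * b.val := by decide
    simp only [Prod.fst_add, Prod.snd_add, map_add, h]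
    ring

lemma phase_mk (i : ZMod n) (r : Fin 2) :
    phase hd (i, r) = ZMod.castHom hd (ZMod 4) i + 2 * r.val := rfl

lemma exists_mem_closedNbhd_phase_eq (v : ZMod n × Fin 2) (k : ZMod 4) :
    ∃ u ∈ closedNbhd v, phase hd u = k := by
  have hk : ∀ a : ZMod 4, a = 0 ∨ a = 1 ∨ a = -1 ∨ a = 2 := by decide
  have h10 : phase hd (1, 0) = 1 := by rw [phase_mk, map_one]; decide
  have h01 : phase hd (0, 1) = 2 := by rw [phase_mk, map_zero]; decide
  rcases hk (k - phase hd v) with h | h | h | h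
  · exact ⟨v, by simp [closedNbhd], by linear_combination -h⟩
  · exact ⟨v + (1, 0), by simp [closedNbhd], by rw [map_add, h10]; linear_combination -h⟩
  · exact ⟨v - (1, 0), by simp [closedNbhd], by rw [map_sub, h10]; linear_combination -h⟩
  · exact ⟨v + (0, 1), by simp [closedNbhd], by rw [map_add, h01]; linear_combination -h⟩

variable [NeZero n]

lemma exists_nsmul_eq_of_phase_eq_zero {x : ZMod n × Fin 2} (hx : phase hd x = 0) :
    ∃ m : ℕ, m • ((2, 1) : ZMod n × Fin 2) = x := by
  obtain ⟨i, r⟩ := x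
  have hdvd : 4 ∣ i.val + 2 * r.val := by
    rw [← ZMod.natCast_eq_zero_iff, ← hx, phase_mk, ZMod.castHom_apply, ← ZMod.natCast_val]
    push_cast
    rfl
  refine ⟨i.val / 2, Prod.ext ?_ ?_⟩
  · show (i.val / 2) • (2 : ZMod n) = i
    rw [nsmul_eq_mul]
    conv_rhs => rw [← ZMod.natCast_zmod_val i, ← Nat.div_mul_cancel (show 2 ∣ i.val by omega)]
    push_cast
    rfl
  · show (i.val / 2) • (1 : Fin 2) = r
    rw [Fin.ext_iff, Fin.val_nsmul, Fin.val_one]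
    omega

def phaseFiber (k : ZMod 4) : Finset (ZMod n × Fin 2) := {v | phase hd v = k}

lemma isDominatingSet_phaseFiber (k : ZMod 4) : IsDominatingSet n (phaseFiber hd k) :=
  isDominatingSet_iff.2 fun v =>
    let ⟨u, hu, hk⟩ := exists_mem_closedNbhd_phase_eq hd v k
    ⟨u, by simp [phaseFiber, hk], hu⟩

lemma two_mul_card_phaseFiber (k : ZMod 4) : 2 * #(phaseFiber hd k) = n := by
  have hsum : ∑ k, #(phaseFiber hd k) = 2 * n := by
    simp only [phaseFiber]
    rw [← card_eq_sum_card_fiberwise (fun _ _ => mem_univ _), card_univ, ← sum_one_eq_two_mul,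
      sum_const, card_univ, smul_eq_mul, mul_one]
  have hle : ∀ k ∈ univ, n ≤ 2 * #(phaseFiber hd k) := fun k _ =>
    le_two_mul_card_of_isDominatingSet (isDominatingSet_phaseFiber hd k)
  refine ((sum_eq_sum_iff_of_le hle).1 ?_ k (mem_univ k)).symm
  rw [← mul_sum, hsum, sum_const, card_univ, ZMod.card, smul_eq_mul]
  ring

lemma phaseFiber_injective : Function.Injective (phaseFiber (n := n) hd) := by
  intro k l hkl
  obtain ⟨v, hv⟩ : (phaseFiber hd k).Nonempty := by
    rw [← card_pos]
    have := two_mul_card_phaseFiber hd k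
    have := NeZero.ne n
    omega
  have hv' := hkl ▸ hv
  simp only [phaseFiber, mem_filter, mem_univ, true_and] at hv hv'
  exact hv.symm.trans hv'

lemma IsPerfectCode.phaseFiber_subset [Nontrivial (ZMod n)] {S : Finset (ZMod n × Fin 2)}
    (hS : IsPerfectCode n S) {u : ZMod n × Fin 2} (hu : u ∈ S) :
    phaseFiber hd (phase hd u) ⊆ S := by
  intro w hw
  have hw0 : phase hd (w - u) = 0 := by
    simp only [phaseFiber, mem_filter, mem_univ, true_and] at hw
    rw [map_sub, hw, sub_self]
  obtain ⟨m, hm⟩ := exists_nsmul_eq_of_phase_eq_zero hd hw0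
  simpa [hm] using hS.add_nsmul_two_one_mem hu m

lemma IsPerfectCode.exists_phaseFiber_eq [Nontrivial (ZMod n)] {S : Finset (ZMod n × Fin 2)}
    (hS : IsPerfectCode n S) : ∃ k, phaseFiber hd k = S :=
  let ⟨u, hu, _⟩ := hS.exists_mem 0
  ⟨phase hd u, hS.eq_of_subset (isDominatingSet_phaseFiber hd _) (hS.phaseFiber_subset hd hu)⟩

end Phase

lemma two_mul_domNum [NeZero n] (hd : 4 ∣ n) : 2 * domNum n = n := by
  have hF := isDominatingSet_phaseFiber hd 0
  refine le_antisymm ?_ ?_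
  · calc 2 * domNum n ≤ 2 * #(phaseFiber hd 0) := by
          gcongr; exact Nat.sInf_le ⟨_, rfl, hF⟩
      _ = n := two_mul_card_phaseFiber hd 0
  · obtain ⟨S, hcard, hS⟩ : domNum n ∈ {k | ∃ S : Finset (ZMod n × Fin 2), #S = k ∧
        IsDominatingSet n S} := Nat.sInf_mem ⟨_, _, rfl, hF⟩
    rw [← hcard]
    exact le_two_mul_card_of_isDominatingSet hS

end PrismGraph

open PrismGraph in
theorem dominion_mod_zero (n : ℕ) (hn : 4 ≤ n) (hmod : n % 4 = 0) :
    dominion n = 4 := by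
  have hd : 4 ∣ n := Nat.dvd_of_mod_eq_zero hmod
  have : NeZero n := ⟨by omega⟩
  have : Fact (1 < n) := ⟨by omega⟩
  have hmin : {S | #S = domNum n ∧ IsDominatingSet n ↑S} = Set.range (phaseFiber hd) := by
    ext S
    refine ⟨fun ⟨hcard, hS⟩ => ?_, ?_⟩
    · have hperfect := isPerfectCode_of_isDominatingSet hS (by rw [hcard, two_mul_domNum hd])
      exact hperfect.exists_phaseFiber_eq hd
    · rintro ⟨k, rfl⟩
      exact ⟨by have := two_mul_card_phaseFiber hd k; have := two_mul_domNum hd; omega,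
        isDominatingSet_phaseFiber hd k⟩
  rw [dominion, hmin, Set.ncard_range_of_injective (phaseFiber_injective hd), Nat.card_zmod]
end

section
/- If n ≥ 5 is odd, then the dominion of the prism graph satisfies ζ(G_n) = 2n. -/
/-!
Every closed neighbourhood of the prism has four vertices, so a dominating set has at least
`n / 2` elements, and for odd `n` the zigzag sets `{(p + 2j, r + j) | j < (n + 1) / 2}` are
dominating sets of size `(n + 1) / 2`; their last column `p + (n - 1)` is `p - 1`, so a zigzag
occupies the two consecutive columns `p - 1` and `p`.

Conversely let `S` be a dominating set of size `(n + 1) / 2`. With `t i` the number of vertices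
of `S` in column `i`, the pairs `(v, u)` with `v` in column `i` and `u ∈ S` in the closed
neighbourhood of `v` number `g i = t (i - 1) + 2 t i + t (i + 1) ≥ 2`, and `∑ g = 4 |S| = 2n + 2`:
the total excess of `g` over `2` is `2`. A full column costs too much excess when `n ≥ 5`, so
`t ≤ 1`; more than half of the columns are occupied, hence two consecutive ones `p - 1, p`, and
these use up the whole excess. Then `g = 2` elsewhere forces the columns `p + 1, p + 3, …` to be
empty, and the two occupied neighbours of an empty column must lie in different rows: `S` is the
zigzag through `(p, r)`. The `2n` zigzags are pairwise distinct.
-/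

open Finset Fin.NatCast

theorem Finset.sum_le_mul_card_add {ι : Type*} [Fintype ι] [DecidableEq ι] {f : ι → ℕ}
    {c d : ℕ} (hc : ∀ i, c ≤ f i) (hsum : ∑ i, f i ≤ c * Fintype.card ι + d) (T : Finset ι) :
    ∑ i ∈ T, f i ≤ c * #T + d := by
  have hcompl : c * #Tᶜ ≤ ∑ i ∈ Tᶜ, f i := by
    simpa [mul_comm] using Tᶜ.card_nsmul_le_sum f c fun i _ => hc i
  rw [← sum_add_sum_compl T f, ← card_add_card_compl T, mul_add] at hsum
  omega

theorem Fin.eq_or_eq_add_one (a s : Fin 2) : s = a ∨ s = a + 1 := by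
  omega

namespace Prism

variable {n : ℕ}

lemma natCast_ne_zero_of_lt {k : ℕ} (h0 : 0 < k) (hk : k < n) : (k : ZMod n) ≠ 0 := by
  rw [Ne, ZMod.natCast_eq_zero_iff]
  exact Nat.not_dvd_of_pos_of_lt h0 hk

lemma sub_one_ne_self (hn : 2 ≤ n) (p : ZMod n) : p - 1 ≠ p := fun h =>
  natCast_ne_zero_of_lt (n := n) (k := 1) one_pos hn (by push_cast; linear_combination -h)

lemma prismGraph_adj_of_ne {i : ZMod n} {s t : Fin 2} (h : s ≠ t) :
    (prismGraph n).Adj (i, s) (i, t) :=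
  ⟨by simp [h], Or.inl ⟨rfl, h⟩⟩

lemma prismGraph_adj_add_one (h1 : (1 : ZMod n) ≠ 0) (i : ZMod n) (s : Fin 2) :
    (prismGraph n).Adj (i, s) (i + 1, s) :=
  ⟨by simpa using h1, Or.inr ⟨rfl, Or.inr rfl⟩⟩

def zigzag (n : ℕ) (p : ZMod n) (r : Fin 2) : Finset (ZMod n × Fin 2) :=
  (range ((n + 1) / 2)).image fun j : ℕ => (p + 2 * j, r + (j : Fin 2))

lemma mem_zigzag {p : ZMod n} {r : Fin 2} {v : ZMod n × Fin 2} :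
    v ∈ zigzag n p r ↔ ∃ j < (n + 1) / 2, (p + 2 * j, r + (j : Fin 2)) = v := by
  simp [zigzag]

lemma mk_mem_zigzag {p : ZMod n} {r : Fin 2} {j : ℕ} (hj : j < (n + 1) / 2) :
    (p + 2 * j, r + (j : Fin 2)) ∈ zigzag n p r :=
  mem_zigzag.2 ⟨j, hj, rfl⟩

lemma card_zigzag (p : ZMod n) (r : Fin 2) : #(zigzag n p r) = (n + 1) / 2 := by
  rw [zigzag, card_image_of_injOn, card_range]
  intro a ha b hb h
  simp only [coe_range, Set.mem_Iio, Prod.mk.injEq, add_right_inj] at ha hb h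
  have h2 : 2 * a < n ∧ 2 * b < n := by omega
  exact Nat.eq_of_mul_eq_mul_left two_pos
    (CharP.natCast_injOn_Iio (ZMod n) n h2.1 h2.2 (by push_cast; exact h.1))

theorem zigzag_isDominatingSet (hodd : n % 2 = 1) (p : ZMod n) (r : Fin 2) :
    IsDominatingSet n ↑(zigzag n p r) := by
  have : NeZero n := ⟨by omega⟩
  rintro ⟨i, s⟩
  obtain ⟨k, hk, rfl⟩ : ∃ k < n, p + k = i := ⟨(i - p).val, ZMod.val_lt _, by simp⟩
  obtain ⟨j, rfl | rfl⟩ := Nat.even_or_odd' k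
  · have hmem := mk_mem_zigzag (p := p) (r := r) (j := j) (by omega)
    push_cast
    by_cases hs : s = r + j
    · exact Or.inl (hs ▸ hmem)
    · exact Or.inr ⟨_, hmem, prismGraph_adj_of_ne (Ne.symm hs)⟩
  · have h1 : (1 : ZMod n) ≠ 0 := by
      exact_mod_cast natCast_ne_zero_of_lt (n := n) one_pos (by omega)
    refine Or.inr ?_
    rcases Fin.eq_or_eq_add_one (r + j) s with rfl | rfl
    · refine ⟨_, mk_mem_zigzag (j := j) (by omega), ?_⟩
      convert prismGraph_adj_add_one h1 (p + 2 * j) (r + j) using 2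
      push_cast
      ring
    · refine ⟨_, mk_mem_zigzag (j := j + 1) (by omega), ?_⟩
      convert (prismGraph_adj_add_one h1 (p + ↑(2 * j + 1)) (r + j + 1)).symm using 2
      · push_cast
        ring
      · rw [Nat.cast_succ, add_assoc]

/-- The column `p'` of a zigzag `zigzag n p r` is `p + 2a` with `2a < n`; the column `p' - 1`,
also occupied, is `p + (2a - 1)`, which is a zigzag column only for `a = 0`. -/
theorem zigzag_injective (hodd : n % 2 = 1) :
    Function.Injective fun q : ZMod n × Fin 2 => zigzag n q.1 q.2 := by
  rintro ⟨p, r⟩ ⟨p', r'⟩ h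
  simp only at h
  have hlast : 2 * (((n - 1) / 2 : ℕ) : ZMod n) = -1 := by
    have h' := congrArg (Nat.cast : ℕ → ZMod n) (show 2 * ((n - 1) / 2) + 1 = n by omega)
    push_cast [ZMod.natCast_self] at h'
    linear_combination h'
  obtain ⟨a, ha, hpa⟩ := mem_zigzag.1 (h ▸ mk_mem_zigzag (p := p') (r := r') (j := 0) (by omega))
  obtain ⟨b, hb, hpb⟩ := mem_zigzag.1
    (h ▸ mk_mem_zigzag (p := p') (r := r') (j := (n - 1) / 2) (by omega))
  simp only [Prod.mk.injEq, Nat.cast_zero, mul_zero, add_zero] at hpa hpb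
  obtain rfl : a = 0 := by
    by_contra ha₀
    have h2 : 2 * a - 1 < n ∧ 2 * b < n := by omega
    have := CharP.natCast_injOn_Iio (ZMod n) n h2.1 h2.2
      (by rw [Nat.cast_sub (by omega)]; push_cast; linear_combination hpa.1 - hpb.1 - hlast)
    omega
  simp_all

def occ (S : Finset (ZMod n × Fin 2)) (i : ZMod n) (s : Fin 2) : ℕ :=
  if (i, s) ∈ S then 1 else 0

def colCount (S : Finset (ZMod n × Fin 2)) (i : ZMod n) : ℕ :=
  occ S i 0 + occ S i 1

/-- Counts with multiplicity: for `n ≤ 2` the columns `i - 1` and `i + 1` coincide. -/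
def nbhdCount (S : Finset (ZMod n × Fin 2)) (i : ZMod n) (s : Fin 2) : ℕ :=
  occ S (i - 1) s + occ S i s + occ S (i + 1) s + occ S i (s + 1)

def colNbhdCount (S : Finset (ZMod n × Fin 2)) (i : ZMod n) : ℕ :=
  colCount S (i - 1) + 2 * colCount S i + colCount S (i + 1)

variable {S : Finset (ZMod n × Fin 2)}

lemma occ_le_one (i : ZMod n) (s : Fin 2) : occ S i s ≤ 1 := by
  unfold occ; split <;> omega

lemma occ_eq_one_iff {i : ZMod n} {s : Fin 2} : occ S i s = 1 ↔ (i, s) ∈ S := by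
  unfold occ; split <;> simp_all

lemma one_le_colCount_of_mem {i : ZMod n} {s : Fin 2} (h : (i, s) ∈ S) : 1 ≤ colCount S i := by
  have := occ_eq_one_iff.2 h
  fin_cases s <;> simp_all [colCount]

lemma nbhdCount_zero_add_nbhdCount_one (i : ZMod n) :
    nbhdCount S i 0 + nbhdCount S i 1 = colNbhdCount S i := by
  simp only [nbhdCount, colNbhdCount, colCount, zero_add, Fin.isValue, Fin.reduceAdd]
  ring

lemma colNbhdCount_add_one (i : ZMod n) : colNbhdCount S (i + 1) =
    colCount S i + 2 * colCount S (i + 1) + colCount S (i + 1 + 1) := by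
  rw [colNbhdCount, add_sub_cancel_right]

lemma colNbhdCount_sub_one (i : ZMod n) : colNbhdCount S (i - 1) =
    colCount S (i - 1 - 1) + 2 * colCount S (i - 1) + colCount S i := by
  rw [colNbhdCount, sub_add_cancel]

lemma one_le_nbhdCount (hdom : IsDominatingSet n S) (i : ZMod n) (s : Fin 2) :
    1 ≤ nbhdCount S i s := by
  have key : (i - 1, s) ∈ S ∨ (i, s) ∈ S ∨ (i + 1, s) ∈ S ∨ (i, s + 1) ∈ S := by
    rcases hdom (i, s) with hv | ⟨⟨j, t⟩, hu, -, hadj⟩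
    · exact Or.inr (Or.inl hv)
    simp only at hadj
    rcases hadj with ⟨rfl, ht⟩ | ⟨rfl, rfl | rfl⟩
    · obtain rfl : t = s + 1 := by omega
      exact Or.inr (Or.inr (Or.inr hu))
    · exact Or.inr (Or.inr (Or.inl hu))
    · exact Or.inl (by simpa using hu)
  unfold nbhdCount
  rcases key with h | h | h | h <;> have := occ_eq_one_iff.2 h <;> omega

lemma two_le_colNbhdCount (hdom : IsDominatingSet n S) (i : ZMod n) :
    2 ≤ colNbhdCount S i := by
  rw [← nbhdCount_zero_add_nbhdCount_one]
  have := one_le_nbhdCount hdom i 0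
  have := one_le_nbhdCount hdom i 1
  omega

lemma mem_add_one_of_mem_sub_one (hdom : IsDominatingSet n S) {i : ZMod n}
    (hi : colCount S i = 0) (hprev : colCount S (i - 1) ≤ 1) {s : Fin 2}
    (hs : (i - 1, s) ∈ S) : (i + 1, s + 1) ∈ S := by
  have hcov := one_le_nbhdCount hdom i (s + 1)
  have hs' := occ_eq_one_iff.2 hs
  have := occ_le_one (S := S) (i + 1) (s + 1)
  rw [← occ_eq_one_iff]
  unfold nbhdCount at hcov
  unfold colCount at hi hprev
  fin_cases s <;> simp only [Fin.zero_eta, Fin.mk_one, Fin.isValue, Fin.reduceAdd] at * <;> omega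

section NeZero

variable [NeZero n]

lemma card_eq_sum_colCount (S : Finset (ZMod n × Fin 2)) : #S = ∑ i, colCount S i :=
  calc #S = ∑ v : ZMod n × Fin 2, occ S v.1 v.2 := by simp [occ]
    _ = ∑ i, colCount S i := by simp [Fintype.sum_prod_type, colCount]

lemma sum_colNbhdCount (S : Finset (ZMod n × Fin 2)) :
    ∑ i, colNbhdCount S i = 4 * #S := by
  have hprev : ∑ i, colCount S (i - 1) = ∑ i, colCount S i :=
    Fintype.sum_equiv (Equiv.subRight 1) _ _ fun _ => rfl
  have hnext : ∑ i, colCount S (i + 1) = ∑ i, colCount S i :=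
    Fintype.sum_equiv (Equiv.addRight 1) _ _ fun _ => rfl
  simp only [colNbhdCount, sum_add_distrib, ← mul_sum, hprev, hnext, card_eq_sum_colCount]
  ring

theorem le_card_of_isDominatingSet (hdom : IsDominatingSet n S) : (n + 1) / 2 ≤ #S := by
  have h := card_nsmul_le_sum univ (colNbhdCount S) 2 fun i _ => two_le_colNbhdCount hdom i
  rw [sum_colNbhdCount, card_univ, ZMod.card, smul_eq_mul] at h
  omega

lemma sum_colNbhdCount_le (hodd : n % 2 = 1) (hdom : IsDominatingSet n S)
    (hcard : #S = (n + 1) / 2) (T : Finset (ZMod n)) :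
    ∑ i ∈ T, colNbhdCount S i ≤ 2 * #T + 2 :=
  sum_le_mul_card_add (two_le_colNbhdCount hdom)
    (by rw [sum_colNbhdCount, hcard, ZMod.card]; omega) T

lemma colNbhdCount_add_colNbhdCount_le (hodd : n % 2 = 1) (hdom : IsDominatingSet n S)
    (hcard : #S = (n + 1) / 2) {i j : ZMod n} (hij : i ≠ j) :
    colNbhdCount S i + colNbhdCount S j ≤ 6 := by
  simpa [sum_pair hij, card_pair hij] using sum_colNbhdCount_le hodd hdom hcard {i, j}

lemma colCount_le_one (hn : 4 ≤ n) (hodd : n % 2 = 1) (hdom : IsDominatingSet n S)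
    (hcard : #S = (n + 1) / 2) (i : ZMod n) : colCount S i ≤ 1 := by
  have hpair {j : ℕ} (h0 : 0 < j) (hj : j < n) :
      colNbhdCount S i + colNbhdCount S (i + j) ≤ 6 := by
    refine colNbhdCount_add_colNbhdCount_le hodd hdom hcard fun h => ?_
    exact natCast_ne_zero_of_lt h0 hj (by linear_combination -h)
  have h₁ := hpair (j := 1) (by omega) (by omega)
  have h₃ := hpair (j := 3) (by omega) (by omega)
  push_cast at h₁ h₃
  rw [show i + 3 = i + 1 + 1 + 1 by ring] at h₃
  have h₂ := two_le_colNbhdCount hdom (i + 1 + 1)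
  have e₀ : colNbhdCount S i = colCount S (i - 1) + 2 * colCount S i + colCount S (i + 1) := rfl
  have e₁ := colNbhdCount_add_one (S := S) i
  have e₂ := colNbhdCount_add_one (S := S) (i + 1)
  have e₃ := colNbhdCount_add_one (S := S) (i + 1 + 1)
  -- A full column `i` leaves no excess for columns `i + 1`, `i + 2`, `i + 3`: this empties
  -- columns `i + 1`, `i + 2` and then fills column `i + 3`.
  omega

lemma exists_consecutive_colCount_eq_one (hodd : n % 2 = 1) (hcard : #S = (n + 1) / 2)
    (hle : ∀ i, colCount S i ≤ 1) : ∃ p, colCount S (p - 1) = 1 ∧ colCount S p = 1 := by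
  have hprev : ∑ i, colCount S (i - 1) = ∑ i, colCount S i :=
    Fintype.sum_equiv (Equiv.subRight 1) _ _ fun _ => rfl
  have hlt : ∑ _i : ZMod n, 1 < ∑ i, (colCount S (i - 1) + colCount S i) := by
    rw [sum_add_distrib, hprev, ← card_eq_sum_colCount, hcard, sum_const, card_univ, ZMod.card]
    simp only [smul_eq_mul, mul_one]
    omega
  obtain ⟨p, -, hp⟩ := exists_lt_of_sum_lt hlt
  have := hle (p - 1)
  have := hle p
  exact ⟨p, by omega, by omega⟩

lemma colNbhdCount_eq_two_of_ne (hn : 2 ≤ n) (hodd : n % 2 = 1) (hdom : IsDominatingSet n S)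
    (hcard : #S = (n + 1) / 2) {p : ZMod n} (hp₁ : colCount S (p - 1) = 1)
    (hp : colCount S p = 1) {i : ZMod n} (hi₁ : i ≠ p - 1) (hi : i ≠ p) :
    colNbhdCount S i = 2 := by
  have hnotMem : p - 1 ∉ ({p, i} : Finset _) := by simp [sub_one_ne_self hn, hi₁.symm]
  have h := sum_colNbhdCount_le hodd hdom hcard {p - 1, p, i}
  rw [sum_insert hnotMem, sum_pair hi.symm, card_insert_of_notMem hnotMem, card_pair hi.symm] at h
  have e₁ := colNbhdCount_sub_one (S := S) p
  have e : colNbhdCount S p = colCount S (p - 1) + 2 * colCount S p + colCount S (p + 1) := rfl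
  have := two_le_colNbhdCount hdom i
  omega

lemma colCount_add_one_eq_zero (hn : 2 ≤ n) (hodd : n % 2 = 1) (hdom : IsDominatingSet n S)
    (hcard : #S = (n + 1) / 2) {p : ZMod n} (hp₁ : colCount S (p - 1) = 1)
    (hp : colCount S p = 1) : colCount S (p + 1) = 0 := by
  have h := colNbhdCount_add_colNbhdCount_le hodd hdom hcard (sub_one_ne_self hn p)
  have e₁ := colNbhdCount_sub_one (S := S) p
  have e : colNbhdCount S p = colCount S (p - 1) + 2 * colCount S p + colCount S (p + 1) := rfl
  omega

lemma zigzag_subset (hn : 5 ≤ n) (hodd : n % 2 = 1) (hdom : IsDominatingSet n S)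
    (hcard : #S = (n + 1) / 2) {p : ZMod n} {r : Fin 2} (hp₁ : colCount S (p - 1) = 1)
    (hr : (p, r) ∈ S) : zigzag n p r ⊆ S := by
  have hle := colCount_le_one (by omega) hodd hdom hcard
  have hp : colCount S p = 1 := le_antisymm (hle p) (one_le_colCount_of_mem hr)
  suffices h : ∀ j : ℕ, 2 * j < n → (p + 2 * j, r + (j : Fin 2)) ∈ S by
    intro v hv
    obtain ⟨j, hj, rfl⟩ := mem_zigzag.1 hv
    exact h j (by omega)
  intro j hj
  induction j with
  | zero => simpa using hr
  | succ j ih =>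
    have hmem := ih (by omega)
    have hempty : colCount S (p + 2 * j + 1) = 0 := by
      rcases Nat.eq_zero_or_pos j with rfl | hj₀
      · simpa using colCount_add_one_eq_zero (by omega) hodd hdom hcard hp₁ hp
      have h₁ : p + 2 * j ≠ p - 1 := fun h => natCast_ne_zero_of_lt (n := n) (k := 2 * j + 1)
        (by omega) (by omega) (by push_cast; linear_combination h)
      have h₀ : p + 2 * j ≠ p := fun h => natCast_ne_zero_of_lt (n := n) (k := 2 * j)
        (by omega) (by omega) (by push_cast; linear_combination h)
      have h₂ := colNbhdCount_eq_two_of_ne (by omega) hodd hdom hcard hp₁ hp h₁ h₀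
      have := one_le_colCount_of_mem hmem
      unfold colNbhdCount at h₂
      omega
    have h := mem_add_one_of_mem_sub_one hdom hempty (by simpa using hle _) (by simpa using hmem)
    convert h using 2
    · push_cast
      ring
    · rw [Nat.cast_succ, add_assoc]

theorem exists_eq_zigzag (hn : 5 ≤ n) (hodd : n % 2 = 1) (hdom : IsDominatingSet n S)
    (hcard : #S = (n + 1) / 2) : ∃ p r, S = zigzag n p r := by
  obtain ⟨p, hp₁, hp⟩ := exists_consecutive_colCount_eq_one hodd hcard
    (colCount_le_one (by omega) hodd hdom hcard)
  obtain ⟨r, hr⟩ : ∃ r, (p, r) ∈ S := by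
    by_contra! h
    simp [colCount, occ, h] at hp
  exact ⟨p, r, (eq_of_subset_of_card_le (zigzag_subset hn hodd hdom hcard hp₁ hr)
    (by rw [card_zigzag, hcard])).symm⟩

end NeZero

theorem domNum_eq_of_odd (hodd : n % 2 = 1) : domNum n = (n + 1) / 2 := by
  have : NeZero n := ⟨by omega⟩
  have hmem := (⟨zigzag n 0 0, card_zigzag 0 0, zigzag_isDominatingSet hodd 0 0⟩ :
    ∃ S : Finset (ZMod n × Fin 2), #S = (n + 1) / 2 ∧ IsDominatingSet n ↑S)
  refine le_antisymm (Nat.sInf_le hmem) (le_csInf ⟨_, hmem⟩ ?_)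
  rintro k ⟨S, rfl, hdom⟩
  exact le_card_of_isDominatingSet hdom

end Prism

open Prism

theorem dominion_odd (n : ℕ) (hn : 5 ≤ n) (hodd : n % 2 = 1) :
    dominion n = 2 * n := by
  have : NeZero n := ⟨by omega⟩
  have hmin : {S : Finset (ZMod n × Fin 2) | #S = domNum n ∧ IsDominatingSet n ↑S} =
      Set.range fun q : ZMod n × Fin 2 => zigzag n q.1 q.2 := by
    ext S
    rw [domNum_eq_of_odd hodd]
    constructor
    · rintro ⟨hcard, hdom⟩
      obtain ⟨p, r, rfl⟩ := exists_eq_zigzag hn hodd hdom hcard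
      exact ⟨(p, r), rfl⟩
    · rintro ⟨⟨p, r⟩, rfl⟩
      exact ⟨card_zigzag p r, zigzag_isDominatingSet hodd p r⟩
  rw [dominion, hmin, Set.ncard_range_of_injective (zigzag_injective hodd),
    Nat.card_eq_fintype_card, Fintype.card_prod, ZMod.card, Fintype.card_fin, mul_comm]
end

section
/- If n ≡ 2 (mod 4) and n ≥ 10, then the dominion of the prism graph satisfies ζ(G_n) = n(n+2). -/
/-!
A vertex set of the prism is encoded by a word `w : ZMod n → Bool × Bool`, one letter per column
(empty, top, bottom or full). Summing, over the vertices of the top row, the number of their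
dominators gives `n ≤ 3 t + b`, where `t` and `b` count the chosen top and bottom vertices;
symmetrically `n ≤ t + 3 b`. So `t + b ≥ n / 2`, with equality only if `t = b = n / 4`; hence
`t + b ≥ n / 2 + 1` when `n ≡ 2 (mod 4)`, and a full column followed by alternately empty and
half-full columns attains this bound.

For a dominating word of weight `n / 2 + 1`, double counting empty columns shows that no two empty
columns are adjacent, and that either there is exactly one full column and no two adjacent occupied
columns, or there is no full column and exactly two adjacent occupied pairs. Around an empty column
the two neighbouring letters must be complementary, so along each run the letters alternate
between top and bottom. The word is thus determined by its full column and one bit (`2 n` words), or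
by its two occupied pairs, whose positions have opposite parity, and two bits (`4 (n / 2) ^ 2`
words): `n (n + 2)` words in all.
-/

namespace PrismGraph

open Finset

def covers (l c r : Bool × Bool) : Bool :=
  (c.1 || c.2 || l.1 || r.1) && (c.1 || c.2 || l.2 || r.2)

def colCard (v : Bool × Bool) : ℕ := v.1.toNat + v.2.toNat

section Columns

variable {l c r v : Bool × Bool}

lemma covers_swap : covers l.swap c.swap r.swap = covers l c r := by
  decide +revert

lemma covers_of_ne_letC (hc : c ≠ letC) : covers l c r := by
  decide +revert

lemma covers_of_letD (h : l = letD ∨ c = letD ∨ r = letD) : covers l c r := by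
  decide +revert

lemma one_le_of_covers (h : covers l c r) : 1 ≤ c.1.toNat + c.2.toNat + l.1.toNat + r.1.toNat := by
  decide +revert

lemma eq_swap_of_covers_letC (h : covers l letC r) (hlC : l ≠ letC) (hlD : l ≠ letD)
    (hrC : r ≠ letC) (hrD : r ≠ letD) : r = l.swap := by
  decide +revert

lemma left_eq_letD_of_covers_letC_letC (h : covers l letC letC) : l = letD := by
  decide +revert

lemma right_eq_letD_of_covers_letC_letC (h : covers letC letC r) : r = letD := by
  decide +revert

lemma colCard_add_ite_letC (v : Bool × Bool) :
    colCard v + (if v = letC then 1 else 0) = 1 + if v = letD then 1 else 0 := by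
  decide +revert

lemma colCard_swap : colCard v.swap = colCard v := by
  decide +revert

lemma eq_mk_not_of_ne (hC : v ≠ letC) (hD : v ≠ letD) : v = (v.1, !v.1) := by
  decide +revert

end Columns

def altLetter (s : Bool) : ℕ → Bool × Bool
  | 0 => (s, !s)
  | 1 => letC
  | j + 2 => (altLetter s j).swap

section AltLetter

variable (s : Bool)

lemma altLetter_eq_letC_iff (j : ℕ) : altLetter s j = letC ↔ j % 2 = 1 := by
  induction j using Nat.twoStepInduction with
  | zero => cases s <;> decide
  | one => simp [altLetter]
  | more j ih _ =>
    rw [altLetter, Nat.add_mod_right, ← ih, Prod.swap_eq_iff_eq_swap]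
    rfl

lemma altLetter_ne_letD (j : ℕ) : altLetter s j ≠ letD := by
  induction j using Nat.twoStepInduction with
  | zero => cases s <;> decide
  | one => rw [altLetter]; decide
  | more j ih _ =>
    rw [altLetter, Ne, Prod.swap_eq_iff_eq_swap]
    exact ih

lemma colCard_altLetter (j : ℕ) : colCard (altLetter s j) = (j + 1) % 2 := by
  induction j using Nat.twoStepInduction with
  | zero => cases s <;> rfl
  | one => rw [altLetter]; rfl
  | more j ih _ =>
    rw [altLetter, colCard_swap, ih]
    omega

lemma covers_altLetter (j : ℕ) :
    covers (altLetter s j) (altLetter s (j + 1)) (altLetter s (j + 2)) := by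
  induction j using Nat.twoStepInduction with
  | zero => cases s <;> decide
  | one => exact covers_of_ne_letC (by cases s <;> decide)
  | more j ih _ =>
    rw [altLetter, altLetter, altLetter, covers_swap]
    exact ih

end AltLetter

lemma sum_range_succ_mod_two (m : ℕ) : ∑ j ∈ range m, (j + 1) % 2 = (m + 1) / 2 := by
  induction m with
  | zero => rfl
  | succ m ih => rw [sum_range_succ, ih]; omega

variable {n : ℕ}

def IsDomWord (w : ZMod n → Bool × Bool) : Prop :=
  ∀ i, covers (w (i - 1)) (w i) (w (i + 1))

lemma isDomWord_swap {w : ZMod n → Bool × Bool} (hw : IsDomWord w) :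
    IsDomWord (Prod.swap ∘ w) := fun i => by
  simpa only [Function.comp_apply, covers_swap] using hw i

lemma fin_two_ne_iff (r s : Fin 2) : s ≠ r ↔ s = r + 1 := by
  decide +revert

lemma mem_or_exists_adj_iff [Fact (1 < n)] (S : Set (ZMod n × Fin 2)) (i : ZMod n) (r : Fin 2) :
    ((i, r) ∈ S ∨ ∃ u ∈ S, (prismGraph n).Adj u (i, r)) ↔
      (i, r) ∈ S ∨ (i, r + 1) ∈ S ∨ (i - 1, r) ∈ S ∨ (i + 1, r) ∈ S := by
  constructor
  · rintro (h | ⟨⟨j, s⟩, hu, -, ⟨hj, hs⟩ | ⟨hs, hj | hj⟩⟩)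
    · exact Or.inl h
    all_goals dsimp only at hj hs
    · rw [hj, (fin_two_ne_iff _ _).1 hs] at hu
      exact Or.inr (Or.inl hu)
    · rw [hj, hs] at hu
      exact Or.inr (Or.inr (Or.inr hu))
    · rw [hs, eq_sub_of_add_eq hj.symm] at hu
      exact Or.inr (Or.inr (Or.inl hu))
  · have h1 : (1 : ZMod n) ≠ 0 := one_ne_zero
    rintro (h | h | h | h)
    · exact Or.inl h
    · refine Or.inr ⟨_, h, ?_, Or.inl ⟨rfl, (fin_two_ne_iff _ _).2 rfl⟩⟩
      simp [(fin_two_ne_iff r (r + 1)).2 rfl]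
    · refine Or.inr ⟨_, h, ?_, Or.inr ⟨rfl, Or.inr (sub_add_cancel i 1).symm⟩⟩
      simp [h1]
    · refine Or.inr ⟨_, h, ?_, Or.inr ⟨rfl, Or.inl rfl⟩⟩
      simp [h1]

@[simp] lemma mem_wordSet_zero (w : ZMod n → Bool × Bool) (i : ZMod n) :
    (i, 0) ∈ wordSet n w ↔ (w i).1 = true := Iff.rfl

@[simp] lemma mem_wordSet_one (w : ZMod n → Bool × Bool) (i : ZMod n) :
    (i, 1) ∈ wordSet n w ↔ (w i).2 = true := Iff.rfl

lemma isDominatingSet_wordSet_iff [Fact (1 < n)] (w : ZMod n → Bool × Bool) :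
    IsDominatingSet n (wordSet n w) ↔ IsDomWord w := by
  simp only [IsDominatingSet, IsDomWord, Prod.forall, Fin.forall_fin_two, mem_or_exists_adj_iff,
    covers]
  refine forall_congr' fun i => ?_
  simp only [Fin.isValue, mem_wordSet_zero, zero_add, mem_wordSet_one, Fin.reduceAdd,
    Bool.and_eq_true, Bool.or_eq_true]
  tauto

def ofFinset (S : Finset (ZMod n × Fin 2)) : ZMod n → Bool × Bool :=
  fun i => ((i, 0) ∈ S, (i, 1) ∈ S)

lemma wordSet_ofFinset (S : Finset (ZMod n × Fin 2)) : wordSet n (ofFinset S) = S := by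
  ext ⟨i, r⟩
  fin_cases r <;> simp [ofFinset]

lemma wordSet_injective : Function.Injective (wordSet n) := by
  intro w w' h
  funext i
  apply Prod.ext <;> rw [Bool.eq_iff_iff]
  · simpa using Set.ext_iff.1 h (i, 0)
  · simpa using Set.ext_iff.1 h (i, 1)

def ofOffsets (b : ZMod n) (g : ℕ → Bool × Bool) : ZMod n → Bool × Bool :=
  fun i => g (i - b).val

lemma ofOffsets_add_natCast (b : ZMod n) (g : ℕ → Bool × Bool) {j : ℕ} (hj : j < n) :
    ofOffsets b g (b + j) = g j := by
  simp [ofOffsets, ZMod.val_cast_of_lt hj]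

lemma natCast_sub_self {k : ℕ} (hk : k ≤ n) : ((n - k : ℕ) : ZMod n) = -k := by
  rw [Nat.cast_sub hk, ZMod.natCast_self, zero_sub]

lemma add_natCast_inj (b : ZMod n) {j k : ℕ} (hj : j < n) (hk : k < n) :
    b + (j : ZMod n) = b + k ↔ j = k := by
  rw [add_right_inj, ZMod.natCast_eq_natCast_iff', Nat.mod_eq_of_lt hj, Nat.mod_eq_of_lt hk]

lemma add_natCast_add_natCast_eq_self_iff (b : ZMod n) {k j : ℕ} (hk0 : 0 < k) (hk : k ≤ n)
    (hj : j < n) :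
    b + k + j = b ↔ j = n - k := by
  rw [← add_natCast_inj (b + (k : ZMod n)) hj (k := n - k) (by omega), natCast_sub_self hk]
  constructor <;> intro h <;> linear_combination h

lemma natCast_ne_zero_of_lt {k : ℕ} (hk0 : 0 < k) (hk : k < n) : (k : ZMod n) ≠ 0 := by
  rw [ne_eq, ZMod.natCast_eq_zero_iff]
  exact Nat.not_dvd_of_pos_of_lt hk0 hk

lemma eq_altLetter_of_run {w : ZMod n → Bool × Bool} (hw : IsDomWord w)
    (hCC : ∀ i, ¬(w i = letC ∧ w (i + 1) = letC)) {b : ZMod n} (hb : w b ≠ letC) {L : ℕ}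
    (hRR : ∀ j < L, ¬(w (b + j) ≠ letC ∧ w (b + j + 1) ≠ letC))
    (hD : ∀ j ≤ L, w (b + j) ≠ letD) : ∀ j ≤ L, w (b + j) = altLetter (w b).1 j := by
  set s := (w b).1
  have hsucc (k : ℕ) : b + ((k + 1 : ℕ) : ZMod n) = b + k + 1 := by push_cast; ring
  have after_letter (k : ℕ) (hk : k < L) (hwk : w (b + k) = altLetter s k)
      (hkC : altLetter s k ≠ letC) : w (b + (k + 1 : ℕ)) = altLetter s (k + 1) := by
    have hC : w (b + (k + 1 : ℕ)) = letC := by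
      by_contra h
      exact hRR k hk ⟨hwk ▸ hkC, hsucc k ▸ h⟩
    rw [hC, eq_comm, altLetter_eq_letC_iff]
    rw [ne_eq, altLetter_eq_letC_iff] at hkC
    omega
  have hb0 : w (b + (0 : ℕ)) = altLetter s 0 := by
    rw [Nat.cast_zero, add_zero]
    exact eq_mk_not_of_ne hb (by simpa using hD 0 (Nat.zero_le _))
  intro j
  induction j using Nat.twoStepInduction with
  | zero => exact fun _ => hb0
  | one => exact fun h1 => after_letter 0 h1 hb0 (by cases s <;> decide)
  | more j ih ih' =>
    intro hj
    by_cases hC : altLetter s (j + 1) = letC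
    · -- an empty column is flanked by complementary letters
      have hj1 := ih' (by omega)
      have hj0 := ih (by omega)
      have hnext : w (b + (j + 2 : ℕ)) ≠ letC := fun h =>
        hCC (b + (j + 1 : ℕ)) ⟨hj1.trans hC, by rwa [← hsucc]⟩
      have hcov := hw (b + (j + 1 : ℕ))
      rw [hsucc, add_sub_cancel_right, ← hsucc, hj1, hC, hj0, ← hsucc] at hcov
      have hj0C : altLetter s j ≠ letC := by
        rw [altLetter_eq_letC_iff] at hC
        rw [ne_eq, altLetter_eq_letC_iff]
        omega
      rw [eq_swap_of_covers_letC hcov hj0C (altLetter_ne_letD s j) hnext (hD _ hj)]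
      rfl
    · exact after_letter (j + 1) (by omega) (ih' (by omega)) hC

def fullColLetter (n : ℕ) (s : Bool) (j : ℕ) : Bool × Bool :=
  if j = n - 2 then letD else altLetter s j

/-- Offsets are counted from `q + 2`, so that the full column `q` sits at offset `n - 2`. -/
def fullColWord (q : ZMod n) (s : Bool) : ZMod n → Bool × Bool :=
  ofOffsets (q + 2) (fullColLetter n s)

lemma add_two_add_natCast_eq_iff (q : ZMod n) {j : ℕ} (hn : 2 ≤ n) (hj : j < n) :
    q + 2 + (j : ZMod n) = q ↔ j = n - 2 := by
  exact_mod_cast add_natCast_add_natCast_eq_self_iff q (k := 2) two_pos hn hj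

lemma fullColWord_add_two (q : ZMod n) (s : Bool) (hn : 3 ≤ n) :
    fullColWord q s (q + 2) = (s, !s) := by
  have := ofOffsets_add_natCast (q + 2) (fullColLetter n s) (j := 0) (by omega)
  rwa [Nat.cast_zero, add_zero, fullColLetter, if_neg (by omega)] at this

def twoRunLetter (a : ℕ) (y z : Bool) (j : ℕ) : Bool × Bool :=
  if j < a then altLetter y j else altLetter z (j - a)

/-- Offsets are counted from `p + 1`; with `a = (q - p).val`, the first run ends at `q`, at offset
`a - 1`, and the second run starts at `q + 1`, at offset `a`. -/
def twoRunWord (p q : ZMod n) (y z : Bool) : ZMod n → Bool × Bool :=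
  ofOffsets (p + 1) (twoRunLetter (q - p).val y z)

lemma twoRunWord_ne_letD (p q : ZMod n) (y z : Bool) (i : ZMod n) :
    twoRunWord p q y z i ≠ letD := by
  unfold twoRunWord ofOffsets twoRunLetter
  split_ifs <;> exact altLetter_ne_letD _ _

variable [NeZero n]

lemma dominion_eq_ncard_isMinDomWord : dominion n = {w | IsMinDomWord n w}.ncard := by
  classical
  refine Set.ncard_congr (fun S _ => ofFinset S) ?_ ?_ ?_
  · rintro S ⟨hcard, hdom⟩
    rw [Set.mem_ofPred_eq, IsMinDomWord, wordSet_ofFinset, Set.ncard_coe_finset]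
    exact ⟨hdom, hcard⟩
  · intro S S' _ _ h
    simpa [wordSet_ofFinset] using congrArg (wordSet n) h
  · intro w ⟨hdom, hcard⟩
    have hw : ofFinset (wordSet n w).toFinset = w :=
      wordSet_injective (by rw [wordSet_ofFinset, Set.coe_toFinset])
    refine ⟨_, ⟨?_, ?_⟩, hw⟩
    · rwa [← Set.ncard_eq_toFinset_card']
    · rwa [Set.coe_toFinset]

def wordCard (w : ZMod n → Bool × Bool) : ℕ := ∑ i, colCard (w i)

lemma ncard_wordSet (w : ZMod n → Bool × Bool) : (wordSet n w).ncard = wordCard w := by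
  classical
  rw [Set.ncard_eq_toFinset_card', wordSet, Set.toFinset_ofPred, card_filter,
    Fintype.sum_prod_type, wordCard]
  refine sum_congr rfl fun i _ => ?_
  rw [Fin.sum_univ_two]
  rcases w i with ⟨_ | _, _ | _⟩ <;> simp [colCard]

lemma sum_comp_add (f : ZMod n → ℕ) (c : ZMod n) : ∑ i, f (i + c) = ∑ i, f i :=
  Equiv.sum_comp (Equiv.addRight c) f

lemma sum_comp_sub (f : ZMod n → ℕ) (c : ZMod n) : ∑ i, f (i - c) = ∑ i, f i :=
  Equiv.sum_comp (Equiv.subRight c) f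

lemma le_three_mul_add (w : ZMod n → Bool × Bool) (hw : IsDomWord w) :
    n ≤ 3 * ∑ i, (w i).1.toNat + ∑ i, (w i).2.toNat := by
  calc n = ∑ _i : ZMod n, 1 := by simp
    _ ≤ ∑ i, ((w i).1.toNat + (w i).2.toNat + (w (i - 1)).1.toNat + (w (i + 1)).1.toNat) :=
      sum_le_sum fun i _ => one_le_of_covers (hw i)
    _ = 3 * ∑ i, (w i).1.toNat + ∑ i, (w i).2.toNat := by
      simp only [sum_add_distrib, sum_comp_sub (fun i => (w i).1.toNat),
        sum_comp_add (fun i => (w i).1.toNat)]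
      ring

lemma half_add_one_le_wordCard (hmod : n % 4 = 2) {w : ZMod n → Bool × Bool} (hw : IsDomWord w) :
    n / 2 + 1 ≤ wordCard w := by
  have htop := le_three_mul_add w hw
  have hbot := le_three_mul_add _ (isDomWord_swap hw)
  simp only [Function.comp_apply, Prod.fst_swap, Prod.snd_swap] at hbot
  have hcard : wordCard w = ∑ i, (w i).1.toNat + ∑ i, (w i).2.toNat := sum_add_distrib
  omega

lemma exists_eq_add_natCast (b i : ZMod n) : ∃ j < n, i = b + j :=
  ⟨(i - b).val, ZMod.val_lt _, by rw [ZMod.natCast_zmod_val, add_sub_cancel]⟩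

lemma sum_comp_val_eq_sum_range (f : ℕ → ℕ) : ∑ i : ZMod n, f i.val = ∑ j ∈ range n, f j := by
  obtain ⟨k, rfl⟩ := Nat.exists_eq_succ_of_ne_zero (NeZero.ne n)
  exact Fin.sum_univ_eq_sum_range f (k + 1)

lemma wordCard_ofOffsets (b : ZMod n) (g : ℕ → Bool × Bool) :
    wordCard (ofOffsets b g) = ∑ j ∈ range n, colCard (g j) :=
  (sum_comp_sub (fun i => colCard (g i.val)) b).trans
    (sum_comp_val_eq_sum_range fun j => colCard (g j))

lemma isDomWord_ofOffsets (hn : 2 ≤ n) (b : ZMod n) {g : ℕ → Bool × Bool}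
    (hinner : ∀ j, j + 2 < n → covers (g j) (g (j + 1)) (g (j + 2)))
    (hlast : covers (g (n - 2)) (g (n - 1)) (g 0)) (hfirst : covers (g (n - 1)) (g 0) (g 1)) :
    IsDomWord (ofOffsets b g) := by
  intro i
  obtain ⟨j, hj, rfl⟩ := exists_eq_add_natCast b i
  have hpred : ∀ k : ℕ, 1 ≤ k → b + ((k : ℕ) : ZMod n) - 1 = b + ((k - 1 : ℕ) : ZMod n) := by
    intro k hk; push_cast [Nat.cast_sub hk]; ring
  have hsucc : ∀ k : ℕ, b + ((k : ℕ) : ZMod n) + 1 = b + ((k + 1 : ℕ) : ZMod n) := by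
    intro k; push_cast; ring
  rcases Nat.eq_zero_or_pos j with rfl | hj0
  · have hwrap : b + ((0 : ℕ) : ZMod n) - 1 = b + ((n - 1 : ℕ) : ZMod n) := by
      rw [natCast_sub_self (by omega)]; push_cast; ring
    rw [hwrap, hsucc, ofOffsets_add_natCast, ofOffsets_add_natCast, ofOffsets_add_natCast]
    all_goals omega
  rcases eq_or_ne j (n - 1) with rfl | hjn
  · have hwrap : b + ((n - 1 : ℕ) : ZMod n) + 1 = b + ((0 : ℕ) : ZMod n) := by
      rw [natCast_sub_self (by omega)]; push_cast; ring
    rw [hwrap, hpred _ hj0, ofOffsets_add_natCast, ofOffsets_add_natCast, ofOffsets_add_natCast,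
      show n - 1 - 1 = n - 2 by omega]
    all_goals omega
  rw [hpred _ hj0, hsucc, ofOffsets_add_natCast, ofOffsets_add_natCast, ofOffsets_add_natCast]
  · simpa [Nat.sub_add_cancel hj0, show j - 1 + 2 = j + 1 by omega] using hinner (j - 1) (by omega)
  all_goals omega

section FullCol

variable (q : ZMod n) (s : Bool)

lemma isDomWord_fullColWord (hn : 4 ≤ n) : IsDomWord (fullColWord q s) := by
  refine isDomWord_ofOffsets (by omega) _ (fun j _ => ?_) ?_ ?_ <;> unfold fullColLetter
  · split_ifs
    all_goals first
      | exact covers_of_letD (by simp)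
      | exact covers_altLetter s j
  · exact covers_of_letD (Or.inl (if_pos rfl))
  · rw [if_neg (by omega : 0 ≠ n - 2)]
    exact covers_of_ne_letC (by cases s <;> decide)

lemma wordCard_fullColWord (hn : 2 ≤ n) (heven : n % 2 = 0) :
    wordCard (fullColWord q s) = n / 2 + 1 := by
  obtain ⟨m, rfl⟩ : ∃ m, n = m + 2 := ⟨n - 2, by omega⟩
  have hlow : ∑ j ∈ range m, colCard (fullColLetter (m + 2) s j) = (m + 1) / 2 := by
    rw [← sum_range_succ_mod_two]
    refine sum_congr rfl fun j hj => ?_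
    rw [fullColLetter, if_neg (by simp at hj; omega), colCard_altLetter]
  rw [fullColWord, wordCard_ofOffsets, sum_range_succ, sum_range_succ, hlow,
    fullColLetter, fullColLetter, if_pos (by omega), if_neg (by omega), colCard_altLetter]
  simp only [colCard, letD, Bool.toNat_true]
  omega

lemma fullColWord_eq_letD_iff (hn : 2 ≤ n) (i : ZMod n) : fullColWord q s i = letD ↔ i = q := by
  obtain ⟨j, hj, rfl⟩ := exists_eq_add_natCast (q + 2) i
  rw [add_two_add_natCast_eq_iff q hn hj, fullColWord, ofOffsets_add_natCast _ _ hj, fullColLetter]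
  split_ifs with h
  · exact iff_of_true rfl h
  · exact iff_of_false (altLetter_ne_letD s j) h

lemma eq_fullColWord (hn : 4 ≤ n) (heven : n % 2 = 0) {w : ZMod n → Bool × Bool}
    (hw : IsDomWord w) (hCC : ∀ i, ¬(w i = letC ∧ w (i + 1) = letC))
    (hRR : ∀ i, ¬(w i ≠ letC ∧ w (i + 1) ≠ letC)) (hD : ∀ i, w i = letD ↔ i = q) :
    w = fullColWord q (w (q + 2)).1 := by
  have hq1 : w (q + 1) = letC := by
    by_contra h
    exact hRR q ⟨by rw [(hD q).2 rfl]; decide, h⟩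
  have hq2 : w (q + 2) ≠ letC := fun h =>
    hCC (q + 1) ⟨hq1, by rwa [add_assoc, one_add_one_eq_two]⟩
  have hrun := eq_altLetter_of_run hw hCC hq2 (L := n - 3) (fun _ _ => hRR _) fun j hj h => by
    rw [hD, add_two_add_natCast_eq_iff q (by omega) (by omega)] at h
    omega
  funext i
  obtain ⟨j, hj, rfl⟩ := exists_eq_add_natCast (q + 2) i
  rw [fullColWord, ofOffsets_add_natCast _ _ hj, fullColLetter]
  split_ifs with hjn
  · rw [hD, add_two_add_natCast_eq_iff q (by omega) hj]
    exact hjn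
  rcases Nat.lt_or_ge j (n - 2) with hjl | hjl
  · exact hrun j (by omega)
  · have hj1 : q + 2 + (j : ZMod n) = q + 1 := by
      rw [show j = n - 1 by omega, natCast_sub_self (by omega)]; push_cast; ring
    rw [hj1, hq1, eq_comm, altLetter_eq_letC_iff]
    omega

end FullCol

section TwoRun

variable (p q : ZMod n) (y z : Bool)

lemma add_val_sub : p + ((q - p).val : ZMod n) = q := by
  rw [ZMod.natCast_zmod_val, add_sub_cancel]

lemma add_one_add_natCast_eq_left_iff {k : ℕ} (hk : k < n) :
    p + 1 + (k : ZMod n) = p ↔ k = n - 1 := by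
  exact_mod_cast add_natCast_add_natCast_eq_self_iff p (k := 1) one_pos (NeZero.pos n) hk

lemma add_one_add_natCast_eq_right_iff (hpos : 0 < (q - p).val) {k : ℕ} (hk : k < n) :
    p + 1 + (k : ZMod n) = q ↔ k = (q - p).val - 1 := by
  have hqa := add_val_sub p q
  have han := ZMod.val_lt (q - p)
  set a := (q - p).val
  rw [← hqa, show p + (a : ZMod n) = p + 1 + ((a - 1 : ℕ) : ZMod n) by
    push_cast [Nat.one_le_iff_ne_zero.2 hpos.ne']; ring, add_natCast_inj _ hk (by omega)]

lemma isDomWord_twoRunWord (hn : 2 ≤ n) (heven : n % 2 = 0) (ha : (q - p).val % 2 = 1) :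
    IsDomWord (twoRunWord p q y z) := by
  have han := ZMod.val_lt (q - p)
  set a := (q - p).val
  refine isDomWord_ofOffsets hn _ (fun j _ => ?_) ?_ ?_ <;> unfold twoRunLetter
  · by_cases hja : j + 2 < a
    · rw [if_pos (by omega), if_pos (by omega), if_pos hja]
      exact covers_altLetter y j
    by_cases haj : a ≤ j
    · rw [if_neg (by omega), if_neg (by omega), if_neg (by omega),
        show j + 1 - a = j - a + 1 by omega, show j + 2 - a = j - a + 2 by omega]
      exact covers_altLetter z (j - a)
    -- at the junction `j + 1 ∈ {a - 1, a}` the middle column is occupied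
    refine covers_of_ne_letC ?_
    split_ifs <;> rw [ne_eq, altLetter_eq_letC_iff] <;> omega
  · refine covers_of_ne_letC ?_
    rw [if_neg (by omega), ne_eq, altLetter_eq_letC_iff]
    omega
  · refine covers_of_ne_letC ?_
    rw [if_pos (by omega)]
    cases y <;> decide

lemma wordCard_twoRunWord (heven : n % 2 = 0) (ha : (q - p).val % 2 = 1) :
    wordCard (twoRunWord p q y z) = n / 2 + 1 := by
  have han := ZMod.val_lt (q - p)
  set a := (q - p).val
  have hsplit := sum_range_add (fun j => colCard (twoRunLetter a y z j)) a (n - a)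
  rw [Nat.add_sub_cancel' han.le] at hsplit
  have hfirst : ∑ j ∈ range a, colCard (twoRunLetter a y z j) = (a + 1) / 2 := by
    rw [← sum_range_succ_mod_two]
    refine sum_congr rfl fun j hj => ?_
    rw [twoRunLetter, if_pos (mem_range.1 hj), colCard_altLetter]
  have hsecond : ∑ j ∈ range (n - a), colCard (twoRunLetter a y z (a + j)) =
      (n - a + 1) / 2 := by
    rw [← sum_range_succ_mod_two]
    refine sum_congr rfl fun j _ => ?_
    rw [twoRunLetter, if_neg (by omega), Nat.add_sub_cancel_left, colCard_altLetter]
  rw [twoRunWord, wordCard_ofOffsets, hsplit, hfirst, hsecond]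
  omega

lemma twoRunWord_add_one_left (hpq : p ≠ q) : twoRunWord p q y z (p + 1) = (y, !y) := by
  have hpos : 0 < (q - p).val := ZMod.val_pos.2 (sub_ne_zero.2 hpq.symm)
  have := ofOffsets_add_natCast (p + 1) (twoRunLetter (q - p).val y z) (j := 0) (NeZero.pos n)
  rwa [Nat.cast_zero, add_zero, twoRunLetter, if_pos hpos] at this

lemma twoRunWord_add_one_right : twoRunWord p q y z (q + 1) = (z, !z) := by
  have := ofOffsets_add_natCast (p + 1) (twoRunLetter (q - p).val y z) (ZMod.val_lt (q - p))
  rwa [add_right_comm, add_val_sub, twoRunLetter, if_neg (lt_irrefl _), Nat.sub_self] at this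

lemma twoRunWord_occupied_iff (heven : n % 2 = 0) (ha : (q - p).val % 2 = 1) (i : ZMod n) :
    (twoRunWord p q y z i ≠ letC ∧ twoRunWord p q y z (i + 1) ≠ letC) ↔ i = p ∨ i = q := by
  have han := ZMod.val_lt (q - p)
  obtain ⟨j, hj, rfl⟩ := exists_eq_add_natCast (p + 1) i
  rw [add_one_add_natCast_eq_left_iff p hj, add_one_add_natCast_eq_right_iff p q (by omega) hj]
  set a := (q - p).val
  rcases eq_or_ne j (n - 1) with rfl | hjn
  · have hwrap : p + 1 + ((n - 1 : ℕ) : ZMod n) + 1 = p + 1 + ((0 : ℕ) : ZMod n) := by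
      rw [natCast_sub_self (by omega)]; push_cast; ring
    rw [hwrap, twoRunWord, ofOffsets_add_natCast _ _ hj, ofOffsets_add_natCast _ _ (NeZero.pos n),
      twoRunLetter, twoRunLetter, if_neg (by omega), if_pos (by omega), ne_eq, ne_eq,
      altLetter_eq_letC_iff, altLetter_eq_letC_iff]
    omega
  · rw [show p + 1 + (j : ZMod n) + 1 = p + 1 + ((j + 1 : ℕ) : ZMod n) by push_cast; ring,
      twoRunWord, ofOffsets_add_natCast _ _ hj, ofOffsets_add_natCast _ _ (by omega),
      twoRunLetter, twoRunLetter]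
    split_ifs <;> simp only [ne_eq, altLetter_eq_letC_iff] <;> omega

end TwoRun

lemma eq_twoRunWord {w : ZMod n → Bool × Bool} (hw : IsDomWord w)
    (hCC : ∀ i, ¬(w i = letC ∧ w (i + 1) = letC)) (hD : ∀ i, w i ≠ letD) {p q : ZMod n}
    (hpq : p ≠ q) (hRR : ∀ i, (w i ≠ letC ∧ w (i + 1) ≠ letC) ↔ i = p ∨ i = q) :
    (q - p).val % 2 = 1 ∧ w = twoRunWord p q (w (p + 1)).1 (w (q + 1)).1 := by
  have hqa := add_val_sub p q
  have hpos : 0 < (q - p).val := ZMod.val_pos.2 (sub_ne_zero.2 hpq.symm)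
  have han := ZMod.val_lt (q - p)
  set a := (q - p).val
  have hp (k : ℕ) (hk : k < n) := add_one_add_natCast_eq_left_iff p hk
  have hq (k : ℕ) (hk : k < n) := add_one_add_natCast_eq_right_iff p q hpos hk
  have hshift (k : ℕ) : q + 1 + (k : ZMod n) = p + 1 + ((a + k : ℕ) : ZMod n) := by
    rw [← hqa]; push_cast; ring
  have hrun₁ := eq_altLetter_of_run hw hCC ((hRR p).2 (Or.inl rfl)).2 (L := a - 1)
    (fun k hk hocc => by
      rcases (hRR _).1 hocc with h | h
      · rw [hp k (by omega)] at h; omega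
      · rw [hq k (by omega)] at h; omega)
    fun k _ => hD _
  have hodd : a % 2 = 1 := by
    have hqC := ((hRR q).2 (Or.inr rfl)).1
    rw [← (hq (a - 1) (by omega)).2 rfl, hrun₁ _ le_rfl, ne_eq, altLetter_eq_letC_iff] at hqC
    omega
  have hrun₂ := eq_altLetter_of_run hw hCC ((hRR q).2 (Or.inr rfl)).2 (L := n - a - 1)
    (fun k hk hocc => by
      rw [hshift] at hocc
      rcases (hRR _).1 hocc with h | h
      · rw [hp _ (by omega)] at h; omega
      · rw [hq _ (by omega)] at h; omega)
    fun k _ => hD _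
  refine ⟨hodd, funext fun i => ?_⟩
  obtain ⟨j, hj, rfl⟩ := exists_eq_add_natCast (p + 1) i
  rw [twoRunWord, ofOffsets_add_natCast _ _ hj, twoRunLetter]
  split_ifs with hja
  · exact hrun₁ j (by omega)
  · rw [← hrun₂ (j - a) (by omega), hshift, Nat.add_sub_cancel' (by omega)]

section Shape

variable (w : ZMod n → Bool × Bool)

def emptyCols : Finset (ZMod n) := univ.filter fun i => w i = letC

def fullCols : Finset (ZMod n) := univ.filter fun i => w i = letD

def emptyPairs : Finset (ZMod n) := univ.filter fun i => w i = letC ∧ w (i + 1) = letC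

def occupiedPairs : Finset (ZMod n) := univ.filter fun i => w i ≠ letC ∧ w (i + 1) ≠ letC

lemma wordCard_add_card_emptyCols : wordCard w + #(emptyCols w) = n + #(fullCols w) := by
  rw [wordCard, emptyCols, fullCols, card_filter, card_filter, ← sum_add_distrib,
    sum_congr rfl fun i _ => colCard_add_ite_letC (w i), sum_add_distrib]
  simp

lemma card_occupiedPairs_add_card_emptyCols :
    #(occupiedPairs w) + 2 * #(emptyCols w) = n + #(emptyPairs w) := by
  have hkey := sum_congr rfl fun i (_ : i ∈ univ) =>
    show ((if w i ≠ letC ∧ w (i + 1) ≠ letC then 1 else 0) +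
        ((if w i = letC then 1 else 0) + if w (i + 1) = letC then 1 else 0) : ℕ) =
      1 + if w i = letC ∧ w (i + 1) = letC then 1 else 0 by split_ifs <;> simp_all
  rw [sum_add_distrib, sum_add_distrib, sum_comp_add (fun i => if w i = letC then 1 else 0),
    sum_add_distrib, sum_const, card_univ, ZMod.card, smul_eq_mul, mul_one] at hkey
  rw [occupiedPairs, emptyCols, emptyPairs, card_filter, card_filter, card_filter]
  omega

variable {w}

lemma emptyPair_flanks (hw : IsDomWord w) {i : ZMod n} (hi : i ∈ emptyPairs w) :
    w (i - 1) = letD ∧ w (i + 2) = letD := by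
  obtain ⟨hi₀, hi₁⟩ := (mem_filter.1 hi).2
  constructor
  · have := hw i
    rw [hi₀, hi₁] at this
    exact left_eq_letD_of_covers_letC_letC this
  · have := hw (i + 1)
    rw [add_sub_cancel_right, add_assoc, one_add_one_eq_two, hi₀, hi₁] at this
    exact right_eq_letD_of_covers_letC_letC this

lemma card_emptyPairs_le (hw : IsDomWord w) : #(emptyPairs w) ≤ #(fullCols w) :=
  card_le_card_of_injOn (· + 2)
    (fun _ hi => mem_filter.2 ⟨mem_univ _, (emptyPair_flanks hw hi).2⟩)
    (fun _ _ _ _ h => add_right_cancel h)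

lemma emptyPairs_eq_empty (hn : 7 ≤ n) (hw : IsDomWord w)
    (hcount : #(occupiedPairs w) + 2 * #(fullCols w) = 2 + #(emptyPairs w)) :
    emptyPairs w = ∅ := by
  have hle := card_emptyPairs_le hw
  by_contra hne
  obtain ⟨i, hi⟩ := nonempty_iff_ne_empty.2 hne
  -- The flanks `i - 1`, `i + 2` of `i` are then the only full columns, and a second empty pair
  -- would need the same two flanks, which forces `6 = 0` in `ZMod n`.
  have hi3 : i - 1 ≠ i + 2 := fun h => natCast_ne_zero_of_lt (n := n) (k := 3) (by omega) (by omega)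
    (by push_cast; linear_combination -h)
  have hsub : {i - 1, i + 2} ⊆ fullCols w := by
    intro x hx
    rcases mem_insert.1 hx with rfl | hx
    · exact mem_filter.2 ⟨mem_univ _, (emptyPair_flanks hw hi).1⟩
    · rw [mem_singleton.1 hx]
      exact mem_filter.2 ⟨mem_univ _, (emptyPair_flanks hw hi).2⟩
  have hpair := card_pair hi3
  have hfull : fullCols w = {i - 1, i + 2} :=
    (eq_of_subset_of_card_le hsub (by have := card_le_card hsub; omega)).symm
  have hfull₂ : #(fullCols w) = 2 := by rw [hfull, hpair]
  obtain ⟨j, hj, hji⟩ := exists_mem_ne (s := emptyPairs w) (by omega) i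
  have hmem₁ : j - 1 ∈ fullCols w := mem_filter.2 ⟨mem_univ _, (emptyPair_flanks hw hj).1⟩
  have hmem₂ : j + 2 ∈ fullCols w := mem_filter.2 ⟨mem_univ _, (emptyPair_flanks hw hj).2⟩
  rw [hfull, mem_insert, mem_singleton] at hmem₁ hmem₂
  rcases hmem₁ with h | h₁
  · exact hji (by linear_combination h)
  rcases hmem₂ with h₂ | h
  · exact natCast_ne_zero_of_lt (n := n) (k := 6) (by omega) (by omega)
      (by push_cast; linear_combination h₂ - h₁)
  · exact hji (by linear_combination h)

lemma shape_of_wordCard_eq (hn : 7 ≤ n) (heven : n % 2 = 0) (hw : IsDomWord w)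
    (hcard : wordCard w = n / 2 + 1) :
    emptyPairs w = ∅ ∧ ((∃ q, fullCols w = {q}) ∧ occupiedPairs w = ∅ ∨
      fullCols w = ∅ ∧ #(occupiedPairs w) = 2) := by
  have h₁ := wordCard_add_card_emptyCols w
  have h₂ := card_occupiedPairs_add_card_emptyCols w
  have hE := emptyPairs_eq_empty hn hw (by omega)
  rw [hE, card_empty] at h₂
  refine ⟨hE, ?_⟩
  rcases Nat.lt_or_ge #(fullCols w) 1 with h0 | h1
  · exact Or.inr ⟨card_eq_zero.1 (by omega), by omega⟩
  · exact Or.inl ⟨card_eq_one.1 (by omega), card_eq_zero.1 (by omega)⟩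

end Shape

lemma val_sub_mod_two (heven : n % 2 = 0) (p q : ZMod n) :
    (q - p).val % 2 = (q.val + p.val) % 2 := by
  rcases le_total p.val q.val with h | h
  · rw [ZMod.val_sub h]
    omega
  · have := ZMod.val_lt p
    rw [← neg_sub, ZMod.neg_val, ZMod.val_sub h]
    split_ifs with h0
    · rw [sub_eq_zero.1 h0]
      omega
    · omega

lemma card_filter_val_mod_two (heven : n % 2 = 0) (r : ℕ) (hr : r < 2) :
    #(univ.filter fun i : ZMod n => i.val % 2 = r) = n / 2 := by
  have heven' : #(univ.filter fun i : ZMod n => i.val % 2 = 0) = n / 2 := by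
    rw [card_filter, sum_comp_val_eq_sum_range (fun j => if j % 2 = 0 then 1 else 0),
      show n / 2 = (n + 1) / 2 by omega, ← sum_range_succ_mod_two]
    exact sum_congr rfl fun j _ => by split_ifs <;> omega
  interval_cases r
  · exact heven'
  · have := card_filter_add_card_filter_not (s := univ) fun i : ZMod n => i.val % 2 = 0
    rw [card_univ, ZMod.card, heven'] at this
    simp only [Nat.mod_two_ne_zero] at this
    omega

lemma isDomWord_and_wordCard_iff (hn : 8 ≤ n) (heven : n % 2 = 0) (w : ZMod n → Bool × Bool) :
    IsDomWord w ∧ wordCard w = n / 2 + 1 ↔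
      (∃ q s, fullColWord q s = w) ∨
        ∃ p q y z, p.val % 2 = 0 ∧ q.val % 2 = 1 ∧ twoRunWord p q y z = w := by
  constructor
  · rintro ⟨hw, hcard⟩
    obtain ⟨hE, ⟨⟨q, hfull⟩, hocc⟩ | ⟨hfull, hocc⟩⟩ :=
      shape_of_wordCard_eq (by omega) heven hw hcard
    all_goals
      have hCC (i : ZMod n) : ¬(w i = letC ∧ w (i + 1) = letC) := fun h =>
        (eq_empty_iff_forall_notMem.1 hE) i (mem_filter.2 ⟨mem_univ _, h⟩)
    · have hRR (i : ZMod n) : ¬(w i ≠ letC ∧ w (i + 1) ≠ letC) := fun h =>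
        (eq_empty_iff_forall_notMem.1 hocc) i (mem_filter.2 ⟨mem_univ _, h⟩)
      have hD (i : ZMod n) : w i = letD ↔ i = q := by
        simpa [fullCols] using Finset.ext_iff.1 hfull i
      exact Or.inl ⟨q, _, (eq_fullColWord q (by omega) heven hw hCC hRR hD).symm⟩
    · have hD (i : ZMod n) : w i ≠ letD := fun h =>
        (eq_empty_iff_forall_notMem.1 hfull) i (mem_filter.2 ⟨mem_univ _, h⟩)
      obtain ⟨p, q, hpq, hpair⟩ := card_eq_two.1 hocc
      have hRR (i : ZMod n) : (w i ≠ letC ∧ w (i + 1) ≠ letC) ↔ i = p ∨ i = q := by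
        simpa [occupiedPairs] using Finset.ext_iff.1 hpair i
      obtain ⟨hodd, hwpq⟩ := eq_twoRunWord hw hCC hD hpq hRR
      rw [val_sub_mod_two heven] at hodd
      rcases Nat.mod_two_eq_zero_or_one p.val with hp | hp
      · exact Or.inr ⟨p, q, _, _, hp, by omega, hwpq.symm⟩
      · have hRR' (i : ZMod n) : (w i ≠ letC ∧ w (i + 1) ≠ letC) ↔ i = q ∨ i = p := by
          rw [hRR, or_comm]
        exact Or.inr ⟨q, p, _, _, by omega, hp, (eq_twoRunWord hw hCC hD hpq.symm hRR').2.symm⟩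
  · rintro (⟨q, s, rfl⟩ | ⟨p, q, y, z, hp, hq, rfl⟩)
    · exact ⟨isDomWord_fullColWord q s (by omega), wordCard_fullColWord q s (by omega) heven⟩
    · have hodd : (q - p).val % 2 = 1 := by rw [val_sub_mod_two heven]; omega
      exact ⟨isDomWord_twoRunWord p q y z (by omega) heven hodd,
        wordCard_twoRunWord p q y z heven hodd⟩

lemma fullColWord_injective (hn : 3 ≤ n) :
    Function.Injective fun t : ZMod n × Bool => fullColWord t.1 t.2 := by
  rintro ⟨q, s⟩ ⟨q', s'⟩ h
  have h' : fullColWord q s = fullColWord q' s' := h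
  obtain rfl : q' = q := by
    rw [← fullColWord_eq_letD_iff q s (by omega), h', fullColWord_eq_letD_iff q' s' (by omega)]
  have hs := congrFun h' (q' + 2)
  rw [fullColWord_add_two _ _ hn, fullColWord_add_two _ _ hn] at hs
  rw [(Prod.mk.inj hs).1]

lemma twoRunWord_injOn (heven : n % 2 = 0) :
    Set.InjOn (fun t : (ZMod n × ZMod n) × Bool × Bool => twoRunWord t.1.1 t.1.2 t.2.1 t.2.2)
      {t | t.1.1.val % 2 = 0 ∧ t.1.2.val % 2 = 1} := by
  rintro ⟨⟨p, q⟩, y, z⟩ ⟨hp, hq⟩ ⟨⟨p', q'⟩, y', z'⟩ ⟨hp', hq'⟩ h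
  dsimp only at hp hq hp' hq'
  have h' : twoRunWord p q y z = twoRunWord p' q' y' z' := h
  have hodd : (q - p).val % 2 = 1 := by rw [val_sub_mod_two heven]; omega
  have hodd' : (q' - p').val % 2 = 1 := by rw [val_sub_mod_two heven]; omega
  have hocc (i : ZMod n) : i = p ∨ i = q ↔ i = p' ∨ i = q' := by
    rw [← twoRunWord_occupied_iff p q y z heven hodd, h',
      twoRunWord_occupied_iff p' q' y' z' heven hodd']
  obtain rfl : p = p' := ((hocc p).1 (Or.inl rfl)).resolve_right fun h => by
    rw [h] at hp; omega
  obtain rfl : q = q' := ((hocc q).1 (Or.inr rfl)).resolve_left fun h => by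
    rw [h] at hq; omega
  have hpq : p ≠ q := fun h => by rw [h] at hp; omega
  have hy := congrFun h' (p + 1)
  have hz := congrFun h' (q + 1)
  rw [twoRunWord_add_one_left _ _ _ _ hpq, twoRunWord_add_one_left _ _ _ _ hpq] at hy
  rw [twoRunWord_add_one_right, twoRunWord_add_one_right] at hz
  rw [(Prod.mk.inj hy).1, (Prod.mk.inj hz).1]

lemma ncard_minDomWords (hn : 8 ≤ n) (heven : n % 2 = 0) :
    {w : ZMod n → Bool × Bool | IsDomWord w ∧ wordCard w = n / 2 + 1}.ncard = n * (n + 2) := by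
  classical
  let fullCol : ZMod n × Bool → ZMod n → Bool × Bool := fun t => fullColWord t.1 t.2
  let twoRun : (ZMod n × ZMod n) × Bool × Bool → ZMod n → Bool × Bool :=
    fun t => twoRunWord t.1.1 t.1.2 t.2.1 t.2.2
  let params : Finset ((ZMod n × ZMod n) × Bool × Bool) :=
    (univ.filter (fun i : ZMod n => i.val % 2 = 0) ×ˢ univ.filter fun i : ZMod n => i.val % 2 = 1)
      ×ˢ univ
  have hset : {w | IsDomWord w ∧ wordCard w = n / 2 + 1} =
      ((univ.image fullCol ∪ params.image twoRun : Finset _) : Set (ZMod n → Bool × Bool)) := by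
    ext w
    simp [isDomWord_and_wordCard_iff hn heven, fullCol, twoRun, params, and_assoc]
  have hdisj : Disjoint (univ.image fullCol) (params.image twoRun) := by
    rw [disjoint_left]
    rintro _ h₁ h₂
    obtain ⟨⟨q, s⟩, -, rfl⟩ := mem_image.1 h₁
    obtain ⟨⟨⟨p', q'⟩, y, z⟩, -, h⟩ := mem_image.1 h₂
    exact twoRunWord_ne_letD p' q' y z q
      ((congrFun h q).trans ((fullColWord_eq_letD_iff q s (by omega) q).2 rfl))
  rw [hset, Set.ncard_coe_finset, card_union_of_disjoint hdisj,
    card_image_of_injective _ (fullColWord_injective (by omega)),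
    card_image_of_injOn ((twoRunWord_injOn heven).mono fun t ht => by simpa [params] using ht),
    card_product, card_product, card_filter_val_mod_two heven 0 two_pos,
    card_filter_val_mod_two heven 1 one_lt_two, card_univ, card_univ, Fintype.card_prod,
    Fintype.card_prod, ZMod.card, Fintype.card_bool]
  obtain ⟨k, rfl⟩ : ∃ k, n = 2 * k := ⟨n / 2, by omega⟩
  rw [Nat.mul_div_cancel_left k two_pos]
  ring

lemma domNum_eq [Fact (1 < n)] (hn : 4 ≤ n) (hmod : n % 4 = 2) : domNum n = n / 2 + 1 := by
  have hmem : n / 2 + 1 ∈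
      {k | ∃ S : Finset (ZMod n × Fin 2), S.card = k ∧ IsDominatingSet n ↑S} := by
    classical
    refine ⟨(wordSet n (fullColWord 0 false)).toFinset, ?_, ?_⟩
    · rw [← Set.ncard_eq_toFinset_card', ncard_wordSet,
        wordCard_fullColWord 0 false (by omega) (by omega)]
    · rw [Set.coe_toFinset, isDominatingSet_wordSet_iff]
      exact isDomWord_fullColWord 0 false hn
  refine le_antisymm (Nat.sInf_le hmem) (le_csInf ⟨_, hmem⟩ ?_)
  rintro k ⟨S, rfl, hS⟩
  rw [← wordSet_ofFinset, isDominatingSet_wordSet_iff] at hS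
  have := half_add_one_le_wordCard hmod hS
  rwa [← ncard_wordSet, wordSet_ofFinset, Set.ncard_coe_finset] at this

end PrismGraph

open PrismGraph in
theorem dominion_mod_two (n : ℕ) (hn : 10 ≤ n) (hmod : n % 4 = 2) :
    dominion n = n * (n + 2) := by
  have : NeZero n := ⟨by omega⟩
  have : Fact (1 < n) := ⟨by omega⟩
  rw [dominion_eq_ncard_isMinDomWord, ← ncard_minDomWords (by omega) (by omega)]
  congr 1
  ext w
  rw [Set.mem_ofPred_eq, Set.mem_ofPred_eq, IsMinDomWord, isDominatingSet_wordSet_iff,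
    ncard_wordSet, domNum_eq (by omega) hmod]
end
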